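/- arXiv:2307.01173 — 3 statements merged into one kernel-verified Lean document; each statement's English description precedes it below -/
import Mathlib

section
/- Let X be a quasi-Banach function space over (Ω,μ). Define Y ⊆ L^0(Ω) as the set of f for which there is a sequence (f_n) in X with 0 ≤ f_n ↑ |f| a.e. and sup_n ‖f_n‖_X < ∞, equipped with ‖f‖_Y = inf{sup_n ‖f_n‖_X : 0 ≤ f_n ↑ |f| a.e., f_n ∈ X}. Then Y is a quasi-Banach function space over (Ω,μ) satisfying the Fatou property, and X ⊆ Y with ‖f‖_Y ≤ ‖f‖_X for all f ∈ X. -/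
open MeasureTheory Filter Set Topology

/-- A quasi-Banach function space over the measure space `(Ω, μ)`:
a complete quasi-normed vector subspace of `L⁰(Ω)` satisfying the
ideal property and the saturation property. -/
structure QBFS {Ω : Type*} [MeasurableSpace Ω] (μ : Measure Ω) where
  carrier : Set (Ω → ℝ)
  qnorm : (Ω → ℝ) → ℝ
  K : ℝ
  one_le_K : 1 ≤ K
  aemeasurable_mem : ∀ f ∈ carrier, AEMeasurable f μ
  zero_mem : (0 : Ω → ℝ) ∈ carrier
  add_mem : ∀ f ∈ carrier, ∀ g ∈ carrier, f + g ∈ carrier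
  smul_mem : ∀ (c : ℝ), ∀ f ∈ carrier, c • f ∈ carrier
  qnorm_nonneg : ∀ f ∈ carrier, 0 ≤ qnorm f
  qnorm_eq_zero_iff : ∀ f ∈ carrier, (qnorm f = 0 ↔ f =ᵐ[μ] 0)
  qnorm_smul : ∀ (c : ℝ), ∀ f ∈ carrier, qnorm (c • f) = |c| * qnorm f
  qnorm_triangle : ∀ f ∈ carrier, ∀ g ∈ carrier, qnorm (f + g) ≤ K * (qnorm f + qnorm g)
  ideal : ∀ f ∈ carrier, ∀ g : Ω → ℝ, AEMeasurable g μ →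
      (∀ᵐ x ∂μ, |g x| ≤ |f x|) → g ∈ carrier ∧ qnorm g ≤ qnorm f
  saturated : ∀ E : Set Ω, MeasurableSet E → 0 < μ E →
      ∃ F, F ⊆ E ∧ MeasurableSet F ∧ 0 < μ F ∧ F.indicator (fun _ => (1 : ℝ)) ∈ carrier
  complete : ∀ f : ℕ → Ω → ℝ, (∀ n, f n ∈ carrier) →
      (∀ ε > 0, ∃ N, ∀ j ≥ N, ∀ k ≥ N, qnorm (f j - f k) < ε) →
      ∃ g ∈ carrier, Tendsto (fun n => qnorm (f n - g)) atTop (𝓝 0)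

namespace QBFS

variable {Ω : Type*} [MeasurableSpace Ω] {μ : Measure Ω}

/-- `X` is a *Banach* function space if its quasi-norm is a norm. -/
def IsBanach (X : QBFS μ) : Prop :=
  ∀ f ∈ X.carrier, ∀ g ∈ X.carrier, X.qnorm (f + g) ≤ X.qnorm f + X.qnorm g

/-- The Köthe dual `X'` of `X`. -/
def kotheDual (X : QBFS μ) : Set (Ω → ℝ) :=
  {g | AEMeasurable g μ ∧ ∀ f ∈ X.carrier, Integrable (fun x => f x * g x) μ}

/-- The Köthe dual norm `‖g‖_{X'} = sup_{‖f‖_X = 1} ‖fg‖_{L¹}`. -/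
noncomputable def dualNorm (X : QBFS μ) (g : Ω → ℝ) : ℝ :=
  sSup ((fun f => ∫ x, |f x * g x| ∂μ) '' {f | f ∈ X.carrier ∧ X.qnorm f = 1})

/-- The Fatou property. -/
def Fatou (X : QBFS μ) : Prop :=
  ∀ (f : ℕ → Ω → ℝ) (g : Ω → ℝ), (∀ n, f n ∈ X.carrier) → AEMeasurable g μ →
    (∀ᵐ x ∂μ, 0 ≤ f 0 x ∧ Monotone (fun n => f n x) ∧
      Tendsto (fun n => f n x) atTop (𝓝 (g x))) →
    BddAbove (Set.range fun n => X.qnorm (f n)) →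
    g ∈ X.carrier ∧ X.qnorm g = ⨆ n, X.qnorm (f n)

/-- Order-continuity: if `f_n ↓ 0` a.e. then `‖f_n‖_X → 0`. -/
def OrderContinuous (X : QBFS μ) : Prop :=
  ∀ f : ℕ → Ω → ℝ, (∀ n, f n ∈ X.carrier) →
    (∀ᵐ x ∂μ, Antitone (fun n => f n x) ∧ Tendsto (fun n => f n x) atTop (𝓝 0)) →
    Tendsto (fun n => X.qnorm (f n)) atTop (𝓝 0)

end QBFS

/-- `ApproxFromBelow X f g` : `g` is a sequence in `X` with `0 ≤ g_n ↑ |f|` a.e.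
and `sup_n ‖g_n‖_X < ∞`. -/
def ApproxFromBelow {Ω : Type*} [MeasurableSpace Ω] {μ : Measure Ω}
    (X : QBFS μ) (f : Ω → ℝ) (g : ℕ → Ω → ℝ) : Prop :=
  (∀ n, g n ∈ X.carrier) ∧
  (∀ᵐ x ∂μ, 0 ≤ g 0 x ∧ Monotone (fun n => g n x) ∧
    Tendsto (fun n => g n x) atTop (𝓝 |f x|)) ∧
  BddAbove (Set.range fun n => X.qnorm (g n))

/-!
The norm of `Y` is the infimum of `supₙ ‖gₙ‖_X` over sequences `0 ≤ gₙ ↑ |f|` in `X`. The key fact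
is that such approximations with `supₙ ‖gₙ‖_X ≤ c` survive a.e. limits: if `fₙ → u` a.e. and
`(G n k)ₖ` approximates `fₙ`, convergence in measure for a finite measure with the same null sets
as `μ`, together with Borel–Cantelli, yields a diagonal `φₙ = G n kₙ → |u|` a.e., and the tail
infima `⨅ j, φ (m + j)` increase to `|u|` with norms at most `‖φₘ‖_X`. This gives the Fatou
property of `Y`; choosing `‖φₙ‖_X → 0` shows that `‖f‖_Y = 0` forces `f = 0` a.e. Completeness is
the Riesz–Fischer argument, in which saturation and the Fatou property make nonnegative series
with geometrically decreasing `Y`-norms converge a.e. and in `Y`.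
-/

open MeasureTheory Filter Set Topology
open scoped ENNReal

noncomputable def tailInf (a : ℕ → ℝ) (m : ℕ) : ℝ := ⨅ j, a (m + j)

section TailInf

variable {a : ℕ → ℝ}

theorem tailInf_le (ha : BddBelow (range a)) (m j : ℕ) : tailInf a m ≤ a (m + j) :=
  ciInf_le (ha.mono (range_comp_subset_range _ a)) j

theorem le_tailInf {b : ℝ} {m : ℕ} (h : ∀ j, b ≤ a (m + j)) : b ≤ tailInf a m :=
  le_ciInf h

theorem tailInf_nonneg {m : ℕ} (ha : ∀ n, 0 ≤ a n) : 0 ≤ tailInf a m :=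
  le_tailInf fun j => ha (m + j)

theorem monotone_tailInf (ha : BddBelow (range a)) : Monotone (tailInf a) := by
  intro m m' hm
  refine le_tailInf fun j => ?_
  simpa [← add_assoc, Nat.add_sub_cancel' hm] using tailInf_le ha m (m' - m + j)

theorem Filter.Tendsto.tailInf {l : ℝ} (h : Tendsto a atTop (𝓝 l)) :
    Tendsto (tailInf a) atTop (𝓝 l) := by
  refine tendsto_order.2 ⟨fun b hb => ?_, fun b hb => ?_⟩
  · obtain ⟨c, hbc, hcl⟩ := exists_between hb
    obtain ⟨N, hN⟩ := eventually_atTop.1 (h.eventually (lt_mem_nhds hcl))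
    exact eventually_atTop.2 ⟨N, fun m hm =>
      hbc.trans_le (le_tailInf fun j => (hN (m + j) (by omega)).le)⟩
  · filter_upwards [h.eventually (gt_mem_nhds hb)] with m hm
    exact (tailInf_le h.bddBelow_range m 0).trans_lt hm

end TailInf

theorem abs_sub_limUnder_le_of_hasSum {y S : ℕ → ℝ}
    (h : ∀ i, HasSum (fun l => |y (i + l) - y (i + l + 1)|) (S i)) :
    Tendsto y atTop (𝓝 (limUnder atTop y)) ∧ ∀ i, |y i - limUnder atTop y| ≤ S i := by
  have hsum : Summable fun l => dist (y l) (y l.succ) := by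
    simpa [Real.dist_eq] using (h 0).summable
  have hlim := (cauchySeq_of_summable_dist hsum).tendsto_limUnder
  refine ⟨hlim, fun i => ?_⟩
  rw [← Real.dist_eq, ← (h i).tsum_eq]
  simpa [Real.dist_eq] using dist_le_tsum_of_dist_le_of_tendsto _ (fun _ => le_rfl) hsum hlim i

theorem exists_tendsto_ae_diagonal {Ω : Type*} [MeasurableSpace Ω] {μ : Measure Ω} [SFinite μ]
    {G : ℕ → ℕ → Ω → ℝ} {f : ℕ → Ω → ℝ} {u : Ω → ℝ} (hG : ∀ n k, AEMeasurable (G n k) μ)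
    (hGf : ∀ n, ∀ᵐ x ∂μ, Tendsto (fun k => G n k x) atTop (𝓝 (f n x)))
    (hfu : ∀ᵐ x ∂μ, Tendsto (fun n => f n x) atTop (𝓝 (u x))) :
    ∃ k : ℕ → ℕ, ∀ᵐ x ∂μ, Tendsto (fun n => G n (k n) x) atTop (𝓝 (u x)) := by
  -- `μ.toFinite` is a finite measure with the same null sets as `μ`
  have hk : ∀ n, ∃ k, μ.toFinite {x | (2⁻¹ : ℝ) ^ n ≤ dist (G n k x) (f n x)} < 2⁻¹ ^ n := by
    intro n
    have hconv : TendstoInMeasure μ.toFinite (G n) atTop (f n) :=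
      tendstoInMeasure_of_tendsto_ae
        (fun k => ((hG n k).mono_ac (toFinite_absolutelyContinuous μ)).aestronglyMeasurable)
        (by rw [ae_toFinite]; exact hGf n)
    exact ((tendstoInMeasure_iff_dist.1 hconv _ (by positivity)).eventually_lt_const
      (ENNReal.pow_pos (by norm_num) n)).exists
  choose k hk using hk
  have hsum : ∑' n, μ.toFinite {x | (2⁻¹ : ℝ) ^ n ≤ dist (G n (k n) x) (f n x)} ≠ ∞ := by
    refine ne_top_of_le_ne_top ?_ (ENNReal.tsum_le_tsum fun n => (hk n).le)
    rw [ENNReal.tsum_geometric, ENNReal.one_sub_inv_two, inv_inv]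
    exact ENNReal.ofNat_ne_top
  have hclose := ae_eventually_notMem hsum
  rw [ae_toFinite] at hclose
  refine ⟨k, ?_⟩
  filter_upwards [hclose, hfu] with x hx hxu
  refine tendsto_of_tendsto_of_dist hxu (squeeze_zero' (Eventually.of_forall fun n => dist_nonneg)
    ?_ (tendsto_pow_atTop_nhds_zero_of_lt_one (by norm_num) (by norm_num : (2⁻¹ : ℝ) < 1)))
  filter_upwards [hx] with n hn
  rw [dist_comm]
  exact (not_le.1 hn).le

namespace QBFS

variable {Ω : Type*} [MeasurableSpace Ω] {μ : Measure Ω} (X : QBFS μ)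

theorem qnorm_zero : X.qnorm 0 = 0 :=
  (X.qnorm_eq_zero_iff 0 X.zero_mem).2 EventuallyEq.rfl

theorem K_pos : 0 < X.K :=
  one_pos.trans_le X.one_le_K

noncomputable def fatouNorm (f : Ω → ℝ) : ℝ :=
  sInf {r | ∃ g, ApproxFromBelow X f g ∧ r = ⨆ n, X.qnorm (g n)}

def fatouCarrier : Set (Ω → ℝ) :=
  {f | AEMeasurable f μ ∧ ∃ g, ApproxFromBelow X f g}

end QBFS

namespace ApproxFromBelow

variable {Ω : Type*} [MeasurableSpace Ω] {μ : Measure Ω} {X : QBFS μ} {f h : Ω → ℝ}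
  {g k : ℕ → Ω → ℝ}

theorem ae_nonneg (hg : ApproxFromBelow X f g) : ∀ᵐ x ∂μ, ∀ n, 0 ≤ g n x :=
  hg.2.1.mono fun _ hx n => hx.1.trans (hx.2.1 (Nat.zero_le n))

theorem qnorm_le_iSup (hg : ApproxFromBelow X f g) (n : ℕ) :
    X.qnorm (g n) ≤ ⨆ n, X.qnorm (g n) :=
  le_ciSup hg.2.2 n

theorem iSup_qnorm_nonneg (hg : ApproxFromBelow X f g) : 0 ≤ ⨆ n, X.qnorm (g n) :=
  (X.qnorm_nonneg _ (hg.1 0)).trans (hg.qnorm_le_iSup 0)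

theorem const {φ : Ω → ℝ} (hφ : φ ∈ X.carrier) (hφf : ∀ᵐ x ∂μ, φ x = |f x|) :
    ApproxFromBelow X f fun _ => φ :=
  ⟨fun _ => hφ, hφf.mono fun x hx => ⟨by simp [hx], monotone_const, by simp [hx]⟩,
    ⟨X.qnorm φ, forall_mem_range.2 fun _ => le_rfl⟩⟩

theorem min_abs (hg : ApproxFromBelow X f g) (hh : AEMeasurable h μ)
    (hhf : ∀ᵐ x ∂μ, |h x| ≤ |f x|) :
    ApproxFromBelow X h (fun n x => min (g n x) |h x|) ∧
      ∀ n, X.qnorm (fun x => min (g n x) |h x|) ≤ X.qnorm (g n) := by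
  have hmem : ∀ n, (fun x => min (g n x) |h x|) ∈ X.carrier ∧
      X.qnorm (fun x => min (g n x) |h x|) ≤ X.qnorm (g n) := fun n =>
    X.ideal _ (hg.1 n) _ ((X.aemeasurable_mem _ (hg.1 n)).min hh.abs) <| hg.ae_nonneg.mono
      fun x hx => abs_le_abs_of_nonneg (le_min (hx n) (abs_nonneg _)) (min_le_left _ _)
  refine ⟨⟨fun n => (hmem n).1, ?_, ⟨⨆ n, X.qnorm (g n), ?_⟩⟩, fun n => (hmem n).2⟩
  · filter_upwards [hg.2.1, hhf] with x ⟨hg0, hmono, hlim⟩ hx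
    refine ⟨le_min hg0 (abs_nonneg _), fun a b hab => min_le_min_right _ (hmono hab), ?_⟩
    simpa [min_eq_right hx] using hlim.min (tendsto_const_nhds (x := |h x|))
  · rintro _ ⟨n, rfl⟩
    exact (hmem n).2.trans (hg.qnorm_le_iSup n)

theorem smul (hg : ApproxFromBelow X f g) (c : ℝ) :
    ApproxFromBelow X (c • f) (fun n => |c| • g n) ∧
      ∀ n, X.qnorm (|c| • g n) = |c| * X.qnorm (g n) := by
  have hnorm : ∀ n, X.qnorm (|c| • g n) = |c| * X.qnorm (g n) := fun n => by
    rw [X.qnorm_smul _ _ (hg.1 n), abs_abs]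
  refine ⟨⟨fun n => X.smul_mem _ _ (hg.1 n), ?_, ⟨|c| * ⨆ n, X.qnorm (g n), ?_⟩⟩, hnorm⟩
  · filter_upwards [hg.2.1] with x ⟨hg0, hmono, hlim⟩
    refine ⟨mul_nonneg (abs_nonneg c) hg0,
      fun a b hab => mul_le_mul_of_nonneg_left (hmono hab) (abs_nonneg c), ?_⟩
    simpa [abs_mul] using hlim.const_mul |c|
  · rintro _ ⟨n, rfl⟩
    exact (hnorm n).trans_le (mul_le_mul_of_nonneg_left (hg.qnorm_le_iSup n) (abs_nonneg c))

theorem add_abs (hg : ApproxFromBelow X f g) (hk : ApproxFromBelow X h k) :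
    ApproxFromBelow X (fun x => |f x| + |h x|) (g + k) ∧
      ∀ n, X.qnorm (g n + k n) ≤ X.K * ((⨆ n, X.qnorm (g n)) + ⨆ n, X.qnorm (k n)) := by
  have hnorm : ∀ n, X.qnorm (g n + k n) ≤ X.K * ((⨆ n, X.qnorm (g n)) + ⨆ n, X.qnorm (k n)) :=
    fun n => (X.qnorm_triangle _ (hg.1 n) _ (hk.1 n)).trans <|
      mul_le_mul_of_nonneg_left (add_le_add (hg.qnorm_le_iSup n) (hk.qnorm_le_iSup n))
        X.K_pos.le
  refine ⟨⟨fun n => X.add_mem _ (hg.1 n) _ (hk.1 n), ?_, ⟨_, forall_mem_range.2 hnorm⟩⟩, hnorm⟩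
  · filter_upwards [hg.2.1, hk.2.1] with x ⟨hg0, hgm, hgl⟩ ⟨hk0, hkm, hkl⟩
    refine ⟨add_nonneg hg0 hk0, fun a b hab => add_le_add (hgm hab) (hkm hab), ?_⟩
    rw [abs_of_nonneg (by positivity)]
    exact hgl.add hkl

end ApproxFromBelow

namespace QBFS

variable {Ω : Type*} [MeasurableSpace Ω] {μ : Measure Ω} {X : QBFS μ} {f h u : Ω → ℝ}
  {g : ℕ → Ω → ℝ}

theorem fatouNorm_nonneg (X : QBFS μ) (f : Ω → ℝ) : 0 ≤ X.fatouNorm f :=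
  Real.sInf_nonneg <| by rintro _ ⟨g, hg, rfl⟩; exact hg.iSup_qnorm_nonneg

theorem fatouNorm_le (hg : ApproxFromBelow X f g) : X.fatouNorm f ≤ ⨆ n, X.qnorm (g n) :=
  csInf_le ⟨0, by rintro _ ⟨g, hg, rfl⟩; exact hg.iSup_qnorm_nonneg⟩ ⟨g, hg, rfl⟩

theorem le_fatouNorm (hf : ∃ g, ApproxFromBelow X f g) {a : ℝ}
    (H : ∀ g, ApproxFromBelow X f g → a ≤ ⨆ n, X.qnorm (g n)) : a ≤ X.fatouNorm f :=
  le_csInf (hf.elim fun g hg => ⟨_, g, hg, rfl⟩) <| by rintro _ ⟨g, hg, rfl⟩; exact H g hg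

theorem exists_approx_lt (hf : ∃ g, ApproxFromBelow X f g) {b : ℝ} (hb : X.fatouNorm f < b) :
    ∃ g, ApproxFromBelow X f g ∧ ⨆ n, X.qnorm (g n) < b := by
  obtain ⟨g₀, hg₀⟩ := hf
  obtain ⟨_, ⟨g, hg, rfl⟩, hgb⟩ := exists_lt_of_csInf_lt (by exact ⟨_, g₀, hg₀, rfl⟩) hb
  exact ⟨g, hg, hgb⟩

theorem fatouNorm_le_mul_of_approx {C : ℝ} (hC : 0 ≤ C) (hf : ∃ g, ApproxFromBelow X f g)
    (H : ∀ g, ApproxFromBelow X f g →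
      ∃ p, ApproxFromBelow X h p ∧ ∀ n, X.qnorm (p n) ≤ C * ⨆ n, X.qnorm (g n)) :
    (∃ p, ApproxFromBelow X h p) ∧ X.fatouNorm h ≤ C * X.fatouNorm f := by
  have hle : ∀ g, ApproxFromBelow X f g → X.fatouNorm h ≤ C * ⨆ n, X.qnorm (g n) := fun g hg =>
    let ⟨_, hp, hpg⟩ := H g hg
    (fatouNorm_le hp).trans (ciSup_le hpg)
  obtain ⟨g, hg⟩ := hf
  refine ⟨(H g hg).imp fun _ hp => hp.1, ?_⟩
  rcases hC.eq_or_lt with rfl | hC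
  · simpa using hle g hg
  · rw [← div_le_iff₀' hC]
    exact le_fatouNorm ⟨g, hg⟩ fun g hg => (div_le_iff₀' hC).2 (hle g hg)

theorem fatouNorm_of_ae_eq_zero (hf : f =ᵐ[μ] 0) :
    (∃ g, ApproxFromBelow X f g) ∧ X.fatouNorm f = 0 := by
  have hg : ApproxFromBelow X f fun _ => 0 :=
    .const X.zero_mem (hf.mono fun x hx => by simp [hx])
  refine ⟨⟨_, hg⟩, le_antisymm ?_ (X.fatouNorm_nonneg f)⟩
  simpa [X.qnorm_zero] using fatouNorm_le hg

theorem exists_approx_le_qnorm (hf : f ∈ X.carrier) :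
    ∃ g, ApproxFromBelow X f g ∧ ⨆ n, X.qnorm (g n) ≤ X.qnorm f := by
  have habs := X.ideal f hf _ (X.aemeasurable_mem f hf).abs (ae_of_all _ fun _ => (abs_abs _).le)
  exact ⟨_, .const habs.1 (ae_of_all _ fun _ => rfl), by simpa using habs.2⟩

theorem mem_fatouCarrier (hf : f ∈ X.carrier) : f ∈ X.fatouCarrier :=
  ⟨X.aemeasurable_mem f hf, (exists_approx_le_qnorm hf).imp fun _ hg => hg.1⟩

theorem fatouNorm_le_qnorm (hf : f ∈ X.carrier) : X.fatouNorm f ≤ X.qnorm f :=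
  let ⟨_, hg, hgf⟩ := exists_approx_le_qnorm hf
  (fatouNorm_le hg).trans hgf

theorem zero_mem_fatouCarrier : (0 : Ω → ℝ) ∈ X.fatouCarrier :=
  ⟨aemeasurable_const, (fatouNorm_of_ae_eq_zero EventuallyEq.rfl).1⟩

theorem fatouCarrier_ideal (hf : f ∈ X.fatouCarrier) (hh : AEMeasurable h μ)
    (hhf : ∀ᵐ x ∂μ, |h x| ≤ |f x|) : h ∈ X.fatouCarrier ∧ X.fatouNorm h ≤ X.fatouNorm f := by
  have := fatouNorm_le_mul_of_approx zero_le_one hf.2 fun g hg =>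
    ⟨_, (hg.min_abs hh hhf).1, fun n => by
      rw [one_mul]
      exact ((hg.min_abs hh hhf).2 n).trans (hg.qnorm_le_iSup n)⟩
  exact ⟨⟨hh, this.1⟩, by simpa using this.2⟩

theorem fatouNorm_smul_le (hf : f ∈ X.fatouCarrier) (c : ℝ) :
    c • f ∈ X.fatouCarrier ∧ X.fatouNorm (c • f) ≤ |c| * X.fatouNorm f := by
  have := fatouNorm_le_mul_of_approx (abs_nonneg c) hf.2 fun g hg =>
    ⟨_, (hg.smul c).1, fun n => ((hg.smul c).2 n).trans_le
      (mul_le_mul_of_nonneg_left (hg.qnorm_le_iSup n) (abs_nonneg c))⟩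
  exact ⟨⟨hf.1.const_smul c, this.1⟩, this.2⟩

theorem smul_mem_fatouCarrier (c : ℝ) (hf : f ∈ X.fatouCarrier) : c • f ∈ X.fatouCarrier :=
  (fatouNorm_smul_le hf c).1

theorem fatouNorm_smul (c : ℝ) (hf : f ∈ X.fatouCarrier) :
    X.fatouNorm (c • f) = |c| * X.fatouNorm f := by
  refine le_antisymm (fatouNorm_smul_le hf c).2 ?_
  rcases eq_or_ne c 0 with rfl | hc
  · simpa using X.fatouNorm_nonneg _
  · calc |c| * X.fatouNorm f = |c| * X.fatouNorm (c⁻¹ • c • f) := by rw [inv_smul_smul₀ hc]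
      _ ≤ |c| * (|c⁻¹| * X.fatouNorm (c • f)) := by
        gcongr
        exact (fatouNorm_smul_le (smul_mem_fatouCarrier c hf) c⁻¹).2
      _ = X.fatouNorm (c • f) := by rw [abs_inv, mul_inv_cancel_left₀ (abs_ne_zero.2 hc)]

theorem fatouNorm_abs_add_abs_le (hf : f ∈ X.fatouCarrier) (hh : h ∈ X.fatouCarrier) :
    (fun x => |f x| + |h x|) ∈ X.fatouCarrier ∧
      X.fatouNorm (fun x => |f x| + |h x|) ≤ X.K * (X.fatouNorm f + X.fatouNorm h) := by
  have hle : ∀ g k, ApproxFromBelow X f g → ApproxFromBelow X h k →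
      X.fatouNorm (fun x => |f x| + |h x|) / X.K ≤
        (⨆ n, X.qnorm (g n)) + ⨆ n, X.qnorm (k n) := fun g k hg hk => by
    rw [div_le_iff₀' X.K_pos]
    exact (fatouNorm_le (hg.add_abs hk).1).trans (ciSup_le (hg.add_abs hk).2)
  obtain ⟨g, hg⟩ := hf.2
  obtain ⟨k, hk⟩ := hh.2
  refine ⟨⟨hf.1.abs.add hh.1.abs, _, (hg.add_abs hk).1⟩, ?_⟩
  rw [← div_le_iff₀' X.K_pos, ← sub_le_iff_le_add, sub_le_comm]
  exact le_fatouNorm hh.2 fun k hk => sub_le_comm.1 <|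
    le_fatouNorm hf.2 fun g hg => sub_le_iff_le_add.2 (hle g k hg hk)

theorem add_mem_fatouCarrier (hf : f ∈ X.fatouCarrier) (hh : h ∈ X.fatouCarrier) :
    f + h ∈ X.fatouCarrier :=
  (fatouCarrier_ideal (fatouNorm_abs_add_abs_le hf hh).1 (hf.1.add hh.1)
    (ae_of_all _ fun _ => (abs_add_le _ _).trans (le_abs_self _))).1

theorem fatouNorm_add_le (hf : f ∈ X.fatouCarrier) (hh : h ∈ X.fatouCarrier) :
    X.fatouNorm (f + h) ≤ X.K * (X.fatouNorm f + X.fatouNorm h) :=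
  (fatouCarrier_ideal (fatouNorm_abs_add_abs_le hf hh).1 (hf.1.add hh.1)
    (ae_of_all _ fun _ => (abs_add_le _ _).trans (le_abs_self _))).2.trans
    (fatouNorm_abs_add_abs_le hf hh).2

theorem sub_mem_fatouCarrier (hf : f ∈ X.fatouCarrier) (hh : h ∈ X.fatouCarrier) :
    f - h ∈ X.fatouCarrier := by
  simpa [sub_eq_add_neg] using add_mem_fatouCarrier hf (smul_mem_fatouCarrier (-1) hh)

theorem approxFromBelow_tailInf {φ : ℕ → Ω → ℝ} (hφ : ∀ n, φ n ∈ X.carrier)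
    (hφ0 : ∀ᵐ x ∂μ, ∀ n, 0 ≤ φ n x) (hφu : ∀ᵐ x ∂μ, Tendsto (fun n => φ n x) atTop (𝓝 |u x|))
    (hbdd : BddAbove (range fun n => X.qnorm (φ n))) :
    ApproxFromBelow X u (fun m x => tailInf (fun n => φ n x) m) ∧
      ∀ m j, X.qnorm (fun x => tailInf (fun n => φ n x) m) ≤ X.qnorm (φ (m + j)) := by
  have hbelow : ∀ᵐ x ∂μ, BddBelow (range fun n => φ n x) :=
    hφ0.mono fun _ hx => ⟨0, forall_mem_range.2 hx⟩
  have hmem : ∀ m j, (fun x => tailInf (fun n => φ n x) m) ∈ X.carrier ∧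
      X.qnorm (fun x => tailInf (fun n => φ n x) m) ≤ X.qnorm (φ (m + j)) := fun m j =>
    X.ideal _ (hφ (m + j)) _ (AEMeasurable.iInf fun i => X.aemeasurable_mem _ (hφ (m + i))) <|
      (hφ0.and hbelow).mono fun _ hx =>
        abs_le_abs_of_nonneg (tailInf_nonneg hx.1) (tailInf_le hx.2 m j)
  refine ⟨⟨fun m => (hmem m 0).1, ?_, ?_⟩, fun m j => (hmem m j).2⟩
  · filter_upwards [hφ0, hbelow, hφu] with x h0 hb hl
    exact ⟨tailInf_nonneg h0, monotone_tailInf hb, hl.tailInf⟩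
  · obtain ⟨c, hc⟩ := hbdd
    exact ⟨c, forall_mem_range.2 fun m => (hmem m 0).2.trans (hc ⟨m + 0, rfl⟩)⟩

theorem exists_approx_of_tendsto_ae [SFinite μ] {f : ℕ → Ω → ℝ} {c : ℝ}
    (hfu : ∀ᵐ x ∂μ, Tendsto (fun n => f n x) atTop (𝓝 (u x)))
    (hc : ∀ n, ∃ g, ApproxFromBelow X (f n) g ∧ ⨆ k, X.qnorm (g k) ≤ c) :
    ∃ g, ApproxFromBelow X u g ∧ ⨆ k, X.qnorm (g k) ≤ c := by
  choose G hG hGc using hc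
  obtain ⟨k, hk⟩ := exists_tendsto_ae_diagonal (fun n k => X.aemeasurable_mem _ ((hG n).1 k))
    (fun n => (hG n).2.1.mono fun _ hx => hx.2.2) (hfu.mono fun _ hx => hx.abs)
  have hbound : ∀ n, X.qnorm (G n (k n)) ≤ c := fun n => ((hG n).qnorm_le_iSup _).trans (hGc n)
  obtain ⟨hT, hTφ⟩ := approxFromBelow_tailInf (fun n => (hG n).1 (k n))
    (ae_all_iff.2 fun n => (hG n).ae_nonneg.mono fun _ hx => hx (k n)) hk
    ⟨c, forall_mem_range.2 hbound⟩
  exact ⟨_, hT, ciSup_le fun m => (hTφ m 0).trans (hbound _)⟩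

theorem fatouNorm_le_of_tendsto_ae [SFinite μ] {f : ℕ → Ω → ℝ} {M : ℝ}
    (hf : ∀ n, ∃ g, ApproxFromBelow X (f n) g)
    (hfu : ∀ᵐ x ∂μ, Tendsto (fun n => f n x) atTop (𝓝 (u x))) (hM : ∀ n, X.fatouNorm (f n) ≤ M) :
    (∃ g, ApproxFromBelow X u g) ∧ X.fatouNorm u ≤ M := by
  have key : ∀ ε > 0, ∃ g, ApproxFromBelow X u g ∧ ⨆ k, X.qnorm (g k) ≤ M + ε := fun ε hε =>
    exists_approx_of_tendsto_ae hfu fun n =>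
      (exists_approx_lt (hf n) ((hM n).trans_lt (lt_add_of_pos_right M hε))).imp
        fun _ hg => ⟨hg.1, hg.2.le⟩
  obtain ⟨g, hg, -⟩ := key 1 one_pos
  refine ⟨⟨g, hg⟩, le_of_forall_pos_le_add fun ε hε => ?_⟩
  obtain ⟨g, hg, hgM⟩ := key ε hε
  exact (fatouNorm_le hg).trans hgM

theorem ae_eq_zero_of_fatouNorm_eq_zero [SFinite μ] (hf : f ∈ X.fatouCarrier)
    (hf0 : X.fatouNorm f = 0) : f =ᵐ[μ] 0 := by
  have hsmall (n : ℕ) : ∃ g, ApproxFromBelow X f g ∧ ⨆ k, X.qnorm (g k) < 2⁻¹ ^ n :=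
    exists_approx_lt hf.2 (by rw [hf0]; positivity)
  choose G hG hGsmall using hsmall
  obtain ⟨k, hk⟩ := exists_tendsto_ae_diagonal (f := fun _ x => |f x|)
    (fun n k => X.aemeasurable_mem _ ((hG n).1 k)) (fun n => (hG n).2.1.mono fun _ hx => hx.2.2)
    (ae_of_all _ fun _ => tendsto_const_nhds)
  have hbound (n : ℕ) : X.qnorm (G n (k n)) ≤ 2⁻¹ ^ n :=
    ((hG n).qnorm_le_iSup _).trans (hGsmall n).le
  obtain ⟨hT, hTφ⟩ := approxFromBelow_tailInf (fun n => (hG n).1 (k n))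
    (ae_all_iff.2 fun n => (hG n).ae_nonneg.mono fun _ hx => hx (k n)) hk
    ⟨1, forall_mem_range.2 fun n => (hbound n).trans (pow_le_one₀ (by norm_num) (by norm_num))⟩
  -- each tail infimum is dominated by `G j (k j)` for all large `j`, whose norms tend to zero
  have hT0 (m : ℕ) : (fun x => tailInf (fun n => G n (k n) x) m) =ᵐ[μ] 0 := by
    refine (X.qnorm_eq_zero_iff _ (hT.1 m)).1 (le_antisymm ?_ (X.qnorm_nonneg _ (hT.1 m)))
    refine ge_of_tendsto' ((tendsto_pow_atTop_nhds_zero_of_lt_one (by norm_num)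
      (by norm_num : (2⁻¹ : ℝ) < 1)).comp (tendsto_add_atTop_nat m))
      fun j => (hTφ m j).trans ((hbound _).trans_eq (by rw [add_comm]; rfl))
  filter_upwards [hT.2.1, ae_all_iff.2 hT0] with x hx hx0
  simp only [hx0, Pi.zero_apply] at hx
  exact abs_eq_zero.1 (tendsto_nhds_unique hx.2.2 tendsto_const_nhds)

theorem fatouNorm_eq_zero_iff [SFinite μ] (hf : f ∈ X.fatouCarrier) :
    X.fatouNorm f = 0 ↔ f =ᵐ[μ] 0 :=
  ⟨ae_eq_zero_of_fatouNorm_eq_zero hf, fun h => (fatouNorm_of_ae_eq_zero h).2⟩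

theorem ae_bddAbove_of_fatouNorm_le [SFinite μ] {s : ℕ → Ω → ℝ} {M : ℝ}
    (hs : ∀ n, s n ∈ X.fatouCarrier) (hmono : ∀ᵐ x ∂μ, 0 ≤ s 0 x ∧ Monotone fun n => s n x)
    (hM : ∀ n, X.fatouNorm (s n) ≤ M) : ∀ᵐ x ∂μ, BddAbove (range fun n => s n x) := by
  have hss' : ∀ᵐ x ∂μ, ∀ n, s n x = (hs n).1.mk _ x := ae_all_iff.2 fun n => (hs n).1.ae_eq_mk
  set E := {x | BddAbove (range fun n => (hs n).1.mk _ x)}ᶜ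
  have hE : MeasurableSet E := (measurableSet_bddAbove_range fun n => (hs n).1.measurable_mk).compl
  suffices μ E = 0 by
    filter_upwards [measure_eq_zero_iff_ae_notMem.1 this, hss'] with x hx hxs
    simpa [E, hxs] using hx
  by_contra hE0
  obtain ⟨F, hFE, hF, hF0, hFX⟩ := X.saturated E hE (pos_iff_ne_zero.2 hE0)
  set χ := F.indicator fun _ => (1 : ℝ)
  have hχ : χ ∈ X.fatouCarrier := mem_fatouCarrier hFX
  -- `s n ↑ ∞` on `F`, so `min (s n) (t • χ) ↑ t • χ` bounds `‖t • χ‖_Y` by `M` for every `t`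
  have hlim (t : ℝ) :
      ∀ᵐ x ∂μ, Tendsto (fun n => min (s n x) ((t • χ) x)) atTop (𝓝 ((t • χ) x)) := by
    filter_upwards [hmono, hss'] with x ⟨h0, hm⟩ hxs
    by_cases hxF : x ∈ F
    · have hx : Tendsto (fun n => s n x) atTop atTop :=
        tendsto_atTop_atTop_of_monotone' hm (by simpa [E, hxs] using hFE hxF)
      exact tendsto_const_nhds.congr' <| (hx.eventually_ge_atTop _).mono fun n hn =>
        (min_eq_right hn).symm
    · simp [χ, hxF, fun n => h0.trans (hm (Nat.zero_le n))]
  have hle (t : ℕ) : t * X.fatouNorm χ ≤ M := by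
    have hmin (n : ℕ) := fatouCarrier_ideal (hs n)
      ((hs n).1.min (hχ.1.const_smul (t : ℝ))) <| hmono.mono fun x ⟨h0, hm⟩ =>
        abs_le_abs_of_nonneg (le_min (h0.trans (hm (Nat.zero_le n)))
          (mul_nonneg t.cast_nonneg (indicator_nonneg (fun _ _ => zero_le_one) x)))
          (min_le_left _ _)
    rw [← abs_of_nonneg (Nat.cast_nonneg (α := ℝ) t), ← fatouNorm_smul _ hχ]
    exact (fatouNorm_le_of_tendsto_ae (fun n => (hmin n).1.2) (hlim t)
      fun n => (hmin n).2.trans (hM n)).2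
  have hχ0 : X.fatouNorm χ = 0 := by
    refine le_antisymm (not_lt.1 fun hpos => ?_) (X.fatouNorm_nonneg χ)
    obtain ⟨t, ht⟩ := exists_nat_gt (M / X.fatouNorm χ)
    exact (hle t).not_gt ((div_lt_iff₀ hpos).1 ht)
  refine hF0.ne' (measure_mono_null (fun x hx => ?_) (ae_iff.1 ((fatouNorm_eq_zero_iff hχ).1 hχ0)))
  simp [χ, hx]

theorem fatouNorm_sum_range_le {a : ℕ → Ω → ℝ} (ha : ∀ l, a l ∈ X.fatouCarrier) (m : ℕ) :
    ∑ l ∈ Finset.range m, a l ∈ X.fatouCarrier ∧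
      X.fatouNorm (∑ l ∈ Finset.range m, a l) ≤
        ∑ l ∈ Finset.range m, X.K ^ (l + 1) * X.fatouNorm (a l) := by
  induction m generalizing a with
  | zero => simpa using ⟨zero_mem_fatouCarrier, (fatouNorm_of_ae_eq_zero EventuallyEq.rfl).2.le⟩
  | succ m ih =>
    obtain ⟨hmem, hle⟩ := ih fun l => ha (l + 1)
    simp only [Finset.sum_range_succ' _ m]
    rw [add_comm]
    refine ⟨add_mem_fatouCarrier (ha 0) hmem, (fatouNorm_add_le (ha 0) hmem).trans ?_⟩
    calc X.K * (X.fatouNorm (a 0) + X.fatouNorm (∑ l ∈ Finset.range m, a (l + 1)))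
        ≤ X.K * (X.fatouNorm (a 0) +
            ∑ l ∈ Finset.range m, X.K ^ (l + 1) * X.fatouNorm (a (l + 1))) := by
          gcongr
          exact X.K_pos.le
      _ = _ := by
          rw [mul_add, Finset.mul_sum, add_comm]
          congr 1
          · exact Finset.sum_congr rfl fun l _ => by ring
          · ring

theorem exists_hasSum_of_fatouNorm_le [SFinite μ] {a : ℕ → Ω → ℝ} {B : ℝ}
    (ha : ∀ l, a l ∈ X.fatouCarrier) (ha0 : ∀ l, ∀ᵐ x ∂μ, 0 ≤ a l x)
    (hB : ∀ l, X.fatouNorm (a l) ≤ B * (2 * X.K)⁻¹ ^ (l + 1)) :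
    ∃ S ∈ X.fatouCarrier, (∀ᵐ x ∂μ, HasSum (fun l => a l x) (S x)) ∧ X.fatouNorm S ≤ B := by
  have hB0 : 0 ≤ B := nonneg_of_mul_nonneg_left ((X.fatouNorm_nonneg _).trans (hB 0))
    (pow_pos (inv_pos.2 (mul_pos two_pos X.K_pos)) 1)
  -- the factors `(2 * K)⁻¹` absorb the weights `K ^ (l + 1)` of the quasi-triangle inequality
  have hpartial (m : ℕ) : ∑ l ∈ Finset.range m, a l ∈ X.fatouCarrier ∧
      X.fatouNorm (∑ l ∈ Finset.range m, a l) ≤ B := by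
    refine ⟨(fatouNorm_sum_range_le ha m).1, (fatouNorm_sum_range_le ha m).2.trans ?_⟩
    calc ∑ l ∈ Finset.range m, X.K ^ (l + 1) * X.fatouNorm (a l)
        ≤ ∑ l ∈ Finset.range m, B / 2 * (1 / 2) ^ l := by
          refine Finset.sum_le_sum fun l _ => (mul_le_mul_of_nonneg_left (hB l)
            (pow_nonneg X.K_pos.le _)).trans_eq ?_
          have hK : X.K * (2 * X.K)⁻¹ = 1 / 2 := by field_simp [X.K_pos.ne']
          calc X.K ^ (l + 1) * (B * (2 * X.K)⁻¹ ^ (l + 1))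
              = B * (X.K * (2 * X.K)⁻¹) ^ (l + 1) := by ring
            _ = B / 2 * (1 / 2) ^ l := by rw [hK]; ring
      _ ≤ B / 2 * 2 := by
          rw [← Finset.mul_sum]
          exact mul_le_mul_of_nonneg_left (sum_geometric_two_le m) (by positivity)
      _ = B := by ring
  have hsum : ∀ᵐ x ∂μ, HasSum (fun l => a l x) (∑' l, a l x) := by
    have hmono : ∀ᵐ x ∂μ, 0 ≤ (∑ l ∈ Finset.range 0, a l) x ∧
        Monotone fun m => (∑ l ∈ Finset.range m, a l) x :=
      (ae_all_iff.2 ha0).mono fun x hx => ⟨by simp, monotone_nat_of_le_succ fun m => by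
        simp [Finset.sum_range_succ, hx m]⟩
    filter_upwards [ae_all_iff.2 ha0, ae_bddAbove_of_fatouNorm_le (fun m => (hpartial m).1)
      hmono fun m => (hpartial m).2] with x hx0 ⟨c, hc⟩
    exact (summable_of_sum_range_le hx0 fun m => by simpa using hc ⟨m, rfl⟩).hasSum
  have hlim : ∀ᵐ x ∂μ, Tendsto (fun m => (∑ l ∈ Finset.range m, a l) x) atTop
      (𝓝 (∑' l, a l x)) :=
    hsum.mono fun _ hx => by simpa using hx.tendsto_sum_nat
  obtain ⟨hS, hSB⟩ := fatouNorm_le_of_tendsto_ae (fun m => (hpartial m).1.2) hlim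
    fun m => (hpartial m).2
  exact ⟨_, ⟨aemeasurable_of_tendsto_metrizable_ae' (fun m => (hpartial m).1.1) hlim, hS⟩,
    hsum, hSB⟩

theorem tendsto_fatouNorm_sub_of_subseq {f : ℕ → Ω → ℝ} {g : Ω → ℝ} {n : ℕ → ℕ} {c : ℕ → ℝ}
    (hf : ∀ m, f m ∈ X.fatouCarrier) (hfg : ∀ i, f (n i) - g ∈ X.fatouCarrier)
    (hc : Tendsto c atTop (𝓝 0)) (hcau : ∀ i, ∀ m ≥ n i, X.fatouNorm (f m - f (n i)) ≤ c i)
    (hsub : ∀ i, X.fatouNorm (f (n i) - g) ≤ c i) :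
    Tendsto (fun m => X.fatouNorm (f m - g)) atTop (𝓝 0) := by
  have hbound (i : ℕ) : ∀ m ≥ n i, X.fatouNorm (f m - g) ≤ 2 * X.K * c i := fun m hm =>
    calc X.fatouNorm (f m - g) = X.fatouNorm ((f m - f (n i)) + (f (n i) - g)) := by
          rw [sub_add_sub_cancel]
      _ ≤ X.K * (c i + c i) :=
          (fatouNorm_add_le (sub_mem_fatouCarrier (hf m) (hf (n i))) (hfg i)).trans <|
            mul_le_mul_of_nonneg_left (add_le_add (hcau i m hm) (hsub i)) X.K_pos.le
      _ = 2 * X.K * c i := by ring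
  have hsmall : Tendsto (fun i => 2 * X.K * c i) atTop (𝓝 0) := by
    simpa using hc.const_mul (2 * X.K)
  refine tendsto_order.2 ⟨fun b hb => Eventually.of_forall fun m =>
    hb.trans_le (X.fatouNorm_nonneg _), fun b hb => ?_⟩
  obtain ⟨i, hi⟩ := (hsmall.eventually (gt_mem_nhds hb)).exists
  exact eventually_atTop.2 ⟨n i, fun m hm => (hbound i m hm).trans_lt hi⟩

theorem fatouCarrier_complete [SFinite μ] (f : ℕ → Ω → ℝ) (hf : ∀ n, f n ∈ X.fatouCarrier)
    (hcau : ∀ ε > 0, ∃ N, ∀ j ≥ N, ∀ k ≥ N, X.fatouNorm (f j - f k) < ε) :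
    ∃ g ∈ X.fatouCarrier, Tendsto (fun n => X.fatouNorm (f n - g)) atTop (𝓝 0) := by
  obtain ⟨r, hr0, hr1, hr⟩ : ∃ r, 0 < r ∧ r < 1 ∧ (2 * X.K)⁻¹ = r :=
    ⟨_, inv_pos.2 (mul_pos two_pos X.K_pos), inv_lt_one_of_one_lt₀ (by linarith [X.one_le_K]), rfl⟩
  obtain ⟨n, hn_mono, hn⟩ := extraction_forall_of_eventually
    (P := fun i N => ∀ j ≥ N, ∀ k ≥ N, X.fatouNorm (f j - f k) < r ^ (i + 1)) fun i =>
      let ⟨N, hN⟩ := hcau _ (pow_pos hr0 (i + 1))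
      eventually_atTop.2 ⟨N, fun _ hN' j hj k hk => hN j (hN'.trans hj) k (hN'.trans hk)⟩
  set d := fun l => f (n l) - f (n (l + 1))
  have hd (l : ℕ) : d l ∈ X.fatouCarrier := sub_mem_fatouCarrier (hf _) (hf _)
  have htail (i : ℕ) : ∃ S ∈ X.fatouCarrier, (∀ᵐ x ∂μ, HasSum (fun l => |d (i + l) x|) (S x)) ∧
      X.fatouNorm S ≤ r ^ i := by
    have habs (l : ℕ) := fatouCarrier_ideal (hd (i + l)) (hd (i + l)).1.abs
      (ae_of_all _ fun _ => (abs_abs _).le)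
    refine exists_hasSum_of_fatouNorm_le (fun l => (habs l).1)
      (fun l => ae_of_all _ fun _ => abs_nonneg _) fun l => (habs l).2.trans ?_
    rw [hr, ← pow_add, ← add_assoc]
    exact (hn (i + l) _ le_rfl _ (hn_mono.monotone (Nat.le_succ _))).le
  choose S hS hdS hSr using htail
  set g : Ω → ℝ := fun x => limUnder atTop fun i => f (n i) x
  have hconv : ∀ᵐ x ∂μ, Tendsto (fun i => f (n i) x) atTop (𝓝 (g x)) ∧
      ∀ i, |f (n i) x - g x| ≤ S i x :=
    (ae_all_iff.2 hdS).mono fun _ hx => abs_sub_limUnder_le_of_hasSum fun i => by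
      simpa [d] using hx i
  have hfg (i : ℕ) := fatouCarrier_ideal (hS i)
    ((hf (n i)).1.sub (aemeasurable_of_tendsto_metrizable_ae' (fun i => (hf (n i)).1)
      (hconv.mono fun _ hx => hx.1)))
    (hconv.mono fun _ hx => (hx.2 i).trans (le_abs_self _))
  refine ⟨g, by simpa using sub_mem_fatouCarrier (hf (n 0)) (hfg 0).1,
    tendsto_fatouNorm_sub_of_subseq hf (fun i => (hfg i).1)
      (tendsto_pow_atTop_nhds_zero_of_lt_one hr0.le hr1) (fun i m hm => ?_)
      fun i => (hfg i).2.trans (hSr i)⟩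
  exact (hn i m hm _ le_rfl).le.trans (pow_le_pow_of_le_one hr0.le hr1.le (Nat.le_succ i))

noncomputable def fatouHull [SFinite μ] (X : QBFS μ) : QBFS μ where
  carrier := X.fatouCarrier
  qnorm := X.fatouNorm
  K := X.K
  one_le_K := X.one_le_K
  aemeasurable_mem _ hf := hf.1
  zero_mem := zero_mem_fatouCarrier
  add_mem _ hf _ hh := add_mem_fatouCarrier hf hh
  smul_mem c _ hf := smul_mem_fatouCarrier c hf
  qnorm_nonneg f _ := X.fatouNorm_nonneg f
  qnorm_eq_zero_iff _ hf := fatouNorm_eq_zero_iff hf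
  qnorm_smul c _ hf := fatouNorm_smul c hf
  qnorm_triangle _ hf _ hh := fatouNorm_add_le hf hh
  ideal _ hf _ hh hhf := fatouCarrier_ideal hf hh hhf
  saturated E hE hE0 :=
    let ⟨F, hFE, hF, hF0, hFX⟩ := X.saturated E hE hE0
    ⟨F, hFE, hF, hF0, mem_fatouCarrier hFX⟩
  complete := fatouCarrier_complete

theorem fatou_fatouHull [SFinite μ] (X : QBFS μ) : X.fatouHull.Fatou := by
  intro f u hf hu hfu hbdd
  obtain ⟨hu_approx, hle⟩ := fatouNorm_le_of_tendsto_ae (fun n => (hf n).2)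
    (hfu.mono fun _ hx => hx.2.2) (le_ciSup hbdd)
  have hu_mem : u ∈ X.fatouCarrier := ⟨hu, hu_approx⟩
  refine ⟨hu_mem, le_antisymm hle (ciSup_le fun n => (fatouCarrier_ideal hu_mem (hf n).1 ?_).2)⟩
  filter_upwards [hfu] with x ⟨h0, hm, hl⟩
  exact abs_le_abs_of_nonneg (h0.trans (hm (Nat.zero_le n))) (hm.ge_of_tendsto hl n)

end QBFS

/-- Every quasi-Banach function space embeds, with norm at most the original
norm, into a quasi-Banach function space `Y` with the Fatou property, where `Y`
is given by the Lorentz construction. -/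
theorem embeds_into_fatou_space
    {Ω : Type*} [MeasurableSpace Ω] {μ : Measure Ω} [SigmaFinite μ]
    (X : QBFS μ) :
    ∃ Y : QBFS μ,
      Y.carrier = {f | AEMeasurable f μ ∧ ∃ g, ApproxFromBelow X f g} ∧
      (∀ f ∈ Y.carrier, Y.qnorm f =
        sInf {r | ∃ g, ApproxFromBelow X f g ∧
          r = sSup (Set.range fun n => X.qnorm (g n))}) ∧
      Y.Fatou ∧ X.carrier ⊆ Y.carrier ∧
      ∀ f ∈ X.carrier, Y.qnorm f ≤ X.qnorm f :=
  ⟨X.fatouHull, rfl, fun _ _ => rfl, X.fatou_fatouHull, fun _ => QBFS.mem_fatouCarrier,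
    fun _ => QBFS.fatouNorm_le_qnorm⟩
end

section
/- Suppose X and Y are quasi-Banach function spaces over (Ω,μ), X ⊆ Y, and ‖f‖_X = ‖f‖_Y for all f ∈ X. If X has the Fatou property, then X = Y. -/
/-!
Saturation lets one exhaust `Ω`, up to a null set, by an increasing sequence of sets `G n` whose
indicators lie in `X` (σ-finiteness reduces this to maximising a finite measure over such sets).
For `f ∈ Y` the truncations `min |f| n` on `G n` then lie in `X`, increase to `|f|` a.e., and
their `X`-norms equal their `Y`-norms, which are at most `‖f‖_Y`. The Fatou property puts `|f|`,
hence `f`, in `X`.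
-/

open MeasureTheory Filter Set Topology

theorem MeasureTheory.exists_monotone_ae_cover_of_saturating {Ω : Type*} [MeasurableSpace Ω]
    {μ : Measure Ω} [SFinite μ] {C : Set (Set Ω)}
    (hC_meas : ∀ s ∈ C, MeasurableSet s) (hC_empty : ∅ ∈ C)
    (hC_union : ∀ s ∈ C, ∀ t ∈ C, s ∪ t ∈ C)
    (hC_sat : ∀ s, MeasurableSet s → 0 < μ s → ∃ t ⊆ s, t ∈ C ∧ 0 < μ t) :
    ∃ G : ℕ → Set Ω, Monotone G ∧ (∀ n, G n ∈ C) ∧ ∀ᵐ x ∂μ, ∃ n, x ∈ G n := by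
  -- Maximise the measure of members of `C` for a finite measure with the same null sets.
  set ν := μ.toFinite
  set M := sSup (ν '' C)
  have hM : M ≠ ⊤ := ne_top_of_le_ne_top (measure_ne_top ν univ)
    (sSup_le (forall_mem_image.2 fun s _ => measure_mono (subset_univ s)))
  obtain ⟨u, -, hu_lim, hu_mem⟩ :=
    exists_seq_tendsto_sSup ⟨_, mem_image_of_mem ν hC_empty⟩ (OrderTop.bddAbove (ν '' C))
  choose t ht_mem ht_eq using hu_mem
  have hacc : ∀ n, accumulate t n ∈ C := by
    intro n
    induction n with
    | zero => rw [accumulate_zero_nat]; exact ht_mem 0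
    | succ n ih => rw [accumulate_succ]; exact hC_union _ ih _ (ht_mem _)
  refine ⟨accumulate t, monotone_accumulate, hacc, ?_⟩
  have hU_meas : MeasurableSet (⋃ n, t n) := .iUnion fun n => hC_meas _ (ht_mem n)
  suffices μ (⋃ n, t n)ᶜ = 0 by
    filter_upwards [measure_eq_zero_iff_ae_notMem.1 this] with x hx
    obtain ⟨n, hn⟩ := mem_iUnion.1 (not_not.1 hx)
    exact ⟨n, subset_accumulate hn⟩
  by_contra hpos
  obtain ⟨F, hF_sub, hF_mem, hF_pos⟩ := hC_sat _ hU_meas.compl (pos_iff_ne_zero.2 hpos)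
  have hdisj : ∀ n, Disjoint (accumulate t n) F := fun n =>
    disjoint_compl_right.mono (iUnion_accumulate (s := t) ▸ subset_iUnion _ n) hF_sub
  -- `F` could be added to every `accumulate t n`, pushing the supremum `M` up by `ν F > 0`.
  have hle : ∀ n, u n + ν F ≤ M := fun n => calc
    u n + ν F ≤ ν (accumulate t n) + ν F := by rw [← ht_eq]; gcongr; exact subset_accumulate
    _ = ν (accumulate t n ∪ F) := (measure_union (hdisj n) (hC_meas _ hF_mem)).symm
    _ ≤ M := le_sSup (mem_image_of_mem ν (hC_union _ (hacc n) _ hF_mem))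
  have hνF : ν F ≤ 0 := ENNReal.le_of_add_le_add_left hM <| by
    rw [add_zero]; exact le_of_tendsto' (hu_lim.add_const _) hle
  exact hF_pos.ne' (toFinite_apply_eq_zero_iff.1 (nonpos_iff_eq_zero.1 hνF))

noncomputable def truncation {Ω : Type*} (G : ℕ → Set Ω) (f : Ω → ℝ) (n : ℕ) : Ω → ℝ :=
  (G n).indicator fun x => min |f x| n

section Truncation

variable {Ω : Type*} {G : ℕ → Set Ω} {f : Ω → ℝ}

lemma truncation_nonneg (n : ℕ) (x : Ω) : 0 ≤ truncation G f n x :=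
  indicator_nonneg (fun _ _ => le_min (abs_nonneg _) n.cast_nonneg) x

lemma abs_truncation_le_abs (n : ℕ) (x : Ω) : |truncation G f n x| ≤ |f x| := by
  rw [abs_of_nonneg (truncation_nonneg n x)]
  calc truncation G f n x ≤ (G n).indicator (fun x => |f x|) x :=
        indicator_le_indicator (min_le_left _ _)
    _ ≤ |f x| := indicator_le_self' (fun _ _ => abs_nonneg _) x

lemma abs_truncation_le_abs_indicator (n : ℕ) (x : Ω) :
    |truncation G f n x| ≤ |(G n).indicator (fun _ => (n : ℝ)) x| := by
  rw [abs_of_nonneg (truncation_nonneg n x),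
    abs_of_nonneg (indicator_nonneg (fun _ _ => n.cast_nonneg) x)]
  exact indicator_le_indicator (min_le_right _ _)

lemma monotone_truncation (hG : Monotone G) (x : Ω) : Monotone fun n => truncation G f n x := by
  intro m n hmn
  by_cases hx : x ∈ G m
  · simp only [truncation, indicator_of_mem hx, indicator_of_mem (hG hmn hx)]
    gcongr
  · simpa only [truncation, indicator_of_notMem hx] using truncation_nonneg n x

lemma tendsto_truncation (hG : Monotone G) {x : Ω} (hx : ∃ n, x ∈ G n) :
    Tendsto (fun n => truncation G f n x) atTop (𝓝 |f x|) := by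
  obtain ⟨m, hm⟩ := hx
  obtain ⟨k, hk⟩ := exists_nat_ge |f x|
  refine tendsto_const_nhds.congr' ?_
  filter_upwards [eventually_ge_atTop (max m k)] with n hn
  rw [truncation, indicator_of_mem (hG (le_of_max_le_left hn) hm),
    min_eq_left (hk.trans (Nat.cast_le.2 (le_of_max_le_right hn)))]

lemma AEMeasurable.truncation [MeasurableSpace Ω] {μ : Measure Ω} (hf : AEMeasurable f μ)
    (hG : ∀ n, MeasurableSet (G n)) (n : ℕ) : AEMeasurable (truncation G f n) μ :=
  (hf.abs.min aemeasurable_const).indicator (hG n)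

end Truncation

namespace QBFS

variable {Ω : Type*} [MeasurableSpace Ω] {μ : Measure Ω} (X : QBFS μ)

def indicatorSets : Set (Set Ω) :=
  {E | MeasurableSet E ∧ E.indicator (fun _ => (1 : ℝ)) ∈ X.carrier}

variable {X}

lemma union_mem_indicatorSets {E F : Set Ω} (hE : E ∈ X.indicatorSets)
    (hF : F ∈ X.indicatorSets) : E ∪ F ∈ X.indicatorSets := by
  refine ⟨hE.1.union hF.1, (X.ideal _ (X.add_mem _ hE.2 _ hF.2) _
    (aemeasurable_const.indicator (hE.1.union hF.1)) (ae_of_all _ fun x => ?_)).1⟩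
  by_cases hxE : x ∈ E <;> by_cases hxF : x ∈ F <;> norm_num [hxE, hxF]

variable (X) in
lemma exists_monotone_indicatorSets_ae_cover [SFinite μ] :
    ∃ G : ℕ → Set Ω, Monotone G ∧ (∀ n, G n ∈ X.indicatorSets) ∧ ∀ᵐ x ∂μ, ∃ n, x ∈ G n := by
  refine exists_monotone_ae_cover_of_saturating (fun _ hs => hs.1)
    ⟨.empty, by rw [indicator_empty]; exact X.zero_mem⟩
    (fun _ hs _ ht => union_mem_indicatorSets hs ht) fun s hs hpos => ?_
  obtain ⟨t, hts, ht_meas, ht_pos, ht_mem⟩ := X.saturated s hs hpos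
  exact ⟨t, hts, ⟨ht_meas, ht_mem⟩, ht_pos⟩

lemma mem_of_abs_mem {f : Ω → ℝ} (habs : (fun x => |f x|) ∈ X.carrier)
    (hf : AEMeasurable f μ) : f ∈ X.carrier :=
  (X.ideal _ habs f hf (ae_of_all _ fun x => (abs_abs (f x)).ge)).1

lemma truncation_mem {G : ℕ → Set Ω} (hG : ∀ n, G n ∈ X.indicatorSets) {f : Ω → ℝ}
    (hf : AEMeasurable f μ) (n : ℕ) : truncation G f n ∈ X.carrier := by
  refine (X.ideal _ (X.smul_mem n _ (hG n).2) _ (hf.truncation (fun n => (hG n).1) n)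
    (ae_of_all _ fun x => ?_)).1
  convert abs_truncation_le_abs_indicator n x using 2
  by_cases hx : x ∈ G n <;> simp [hx]

lemma qnorm_truncation_le {G : ℕ → Set Ω} (hG : ∀ n, MeasurableSet (G n)) {f : Ω → ℝ}
    (hf : f ∈ X.carrier) (n : ℕ) : X.qnorm (truncation G f n) ≤ X.qnorm f :=
  (X.ideal f hf _ ((X.aemeasurable_mem f hf).truncation hG n)
    (ae_of_all _ (abs_truncation_le_abs n))).2

theorem Fatou.mem_of_bddAbove_qnorm_truncation (hX : X.Fatou) {G : ℕ → Set Ω}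
    (hG_mono : Monotone G) (hG : ∀ n, G n ∈ X.indicatorSets) (hcover : ∀ᵐ x ∂μ, ∃ n, x ∈ G n)
    {f : Ω → ℝ} (hf : AEMeasurable f μ)
    (hbdd : BddAbove (range fun n => X.qnorm (truncation G f n))) : f ∈ X.carrier := by
  refine mem_of_abs_mem (hX _ _ (truncation_mem hG hf) hf.abs ?_ hbdd).1 hf
  filter_upwards [hcover] with x hx
  exact ⟨truncation_nonneg 0 x, monotone_truncation hG_mono x, tendsto_truncation hG_mono hx⟩

end QBFS

/-- A quasi-Banach function space with the Fatou property admits no proper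
isometric quasi-Banach function space extension. -/
theorem no_proper_extension_of_fatou
    {Ω : Type*} [MeasurableSpace Ω] {μ : Measure Ω} [SigmaFinite μ]
    (X Y : QBFS μ) (hsub : X.carrier ⊆ Y.carrier)
    (hnorm : ∀ f ∈ X.carrier, X.qnorm f = Y.qnorm f)
    (hfatou : X.Fatou) :
    X.carrier = Y.carrier := by
  refine Subset.antisymm hsub fun f hf => ?_
  have hf_meas := Y.aemeasurable_mem f hf
  obtain ⟨G, hG_mono, hG, hcover⟩ := X.exists_monotone_indicatorSets_ae_cover
  refine hfatou.mem_of_bddAbove_qnorm_truncation hG_mono hG hcover hf_meas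
    ⟨Y.qnorm f, forall_mem_range.2 fun n => ?_⟩
  calc X.qnorm (truncation G f n) = Y.qnorm (truncation G f n) :=
        hnorm _ (QBFS.truncation_mem hG hf_meas n)
    _ ≤ Y.qnorm f := Y.qnorm_truncation_le (fun n => (hG n).1) hf n
end

section
/- Let X be an order-continuous quasi-Banach function space over (Ω,μ). Then every bounded linear functional on X is given by integration against a function in the Köthe dual: for every x* ∈ X* there exists g ∈ X' with x*(f) = ∫_Ω fg dμ for all f ∈ X. -/
open MeasureTheory Filter Set Topology

/-!
For a weight `w ∈ X`, order continuity makes `E ↦ φ (1_E w)` countably additive, and it vanishes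
on `μ`-null sets, so it has a Radon–Nikodym density. Saturation and σ-finiteness give disjoint sets
`F k` with `1_{F k} ∈ X` covering `Ω` up to a null set; gluing the densities of the weights
`1_{F k}` gives `g` with `φ s = ∫ s g` for every simple `s` supported on finitely many `F k`.
A nonnegative `f ∈ X` is the increasing a.e. limit of such `s n`. Order continuity gives
`φ (s n) → φ f`; since `∫ s n |g| = φ (s n 1_{g ≥ 0}) - φ (s n 1_{g < 0}) ≤ 2 ‖φ‖ ‖f‖`, Fatou's
lemma makes `f g` integrable, and dominated convergence gives `∫ s n g → ∫ f g`.
-/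

open scoped NNReal ENNReal Function

theorem MeasurableSet.accumulate {Ω : Type*} [MeasurableSpace Ω] {F : ℕ → Set Ω}
    (hF : ∀ n, MeasurableSet (F n)) (n : ℕ) : MeasurableSet (accumulate F n) := by
  rw [accumulate_def]
  exact .biUnion (to_countable _) fun k _ => hF k

theorem MeasureTheory.SimpleFunc.exists_seq_monotone_tendsto_of_nonneg {Ω : Type*}
    [MeasurableSpace Ω] {f : Ω → ℝ} (hf : Measurable f) (h0 : 0 ≤ f) :
    ∃ s : ℕ → SimpleFunc Ω ℝ, (∀ n x, 0 ≤ s n x ∧ s n x ≤ f x) ∧ (∀ x, Monotone (s · x)) ∧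
      ∀ x, Tendsto (s · x) atTop (𝓝 (f x)) := by
  set F : Ω → ℝ≥0∞ := fun x => ENNReal.ofReal (f x)
  have hF : Measurable F := hf.ennreal_ofReal
  have hle : ∀ n x, eapprox F n x ≤ F x := fun n x =>
    (le_iSup (fun n => eapprox F n x) n).trans_eq (iSup_eapprox_apply hF x)
  refine ⟨fun n => (eapprox F n).map ENNReal.toReal, fun n x => ⟨ENNReal.toReal_nonneg,
    ENNReal.toReal_le_of_le_ofReal (h0 x) (hle n x)⟩, fun x m n hmn => ?_, fun x => ?_⟩
  · exact ENNReal.toReal_mono (eapprox_lt_top F n x).ne (monotone_eapprox F hmn x)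
  · have h := (ENNReal.tendsto_toReal ENNReal.ofReal_ne_top).comp (tendsto_eapprox hF x)
    rwa [ENNReal.toReal_ofReal (h0 x)] at h

theorem MeasureTheory.SimpleFunc.exists_seq_supported_monotone_tendsto_ae {Ω : Type*}
    [MeasurableSpace Ω] {μ : Measure Ω} {f : Ω → ℝ} (hf : Measurable f) (h0 : 0 ≤ f)
    {G : ℕ → Set Ω} (hGm : ∀ n, MeasurableSet (G n)) (hG : Monotone G)
    (hcover : ∀ᵐ x ∂μ, x ∈ ⋃ n, G n) :
    ∃ t : ℕ → SimpleFunc Ω ℝ, (∀ n x, 0 ≤ t n x ∧ t n x ≤ f x) ∧ (∀ n, ∀ x ∉ G n, t n x = 0) ∧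
      (∀ x, Monotone (t · x)) ∧ ∀ᵐ x ∂μ, Tendsto (t · x) atTop (𝓝 (f x)) := by
  obtain ⟨s, hs, hs_mono, hs_lim⟩ := exists_seq_monotone_tendsto_of_nonneg hf h0
  have ht : ∀ n x, (s n).restrict (G n) x = (G n).indicator (s n) x := fun n x =>
    restrict_apply _ (hGm n) x
  refine ⟨fun n => (s n).restrict (G n), fun n x => ?_, fun n x hx => ?_, fun x m n hmn => ?_, ?_⟩
  · rw [ht]
    by_cases hx : x ∈ G n
    · simpa [hx] using hs n x
    · simpa [hx] using h0 x
  · rw [ht, indicator_of_notMem hx]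
  · simp only [ht]
    exact (indicator_le_indicator_of_subset (hG hmn) (fun y => (hs m y).1) x).trans
      (indicator_le_indicator (hs_mono x hmn))
  · filter_upwards [hcover] with x hx
    obtain ⟨k, hk⟩ := mem_iUnion.1 hx
    refine (hs_lim x).congr' ?_
    filter_upwards [eventually_ge_atTop k] with n hn
    rw [ht, indicator_of_mem (hG hn hk)]

theorem MeasureTheory.integrable_of_tendsto_ae_of_integral_norm_le {Ω E : Type*}
    [MeasurableSpace Ω] {μ : Measure Ω} [NormedAddCommGroup E] {F : ℕ → Ω → E} {f : Ω → E}
    (hF : ∀ n, Integrable (F n) μ) (hlim : ∀ᵐ x ∂μ, Tendsto (F · x) atTop (𝓝 (f x))) {C : ℝ}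
    (hC : ∀ n, ∫ x, ‖F n x‖ ∂μ ≤ C) : Integrable f μ := by
  refine memLp_one_iff_integrable.1 ⟨aestronglyMeasurable_of_tendsto_ae _
    (fun n => (hF n).aestronglyMeasurable) hlim, ?_⟩
  refine (Lp.eLpNorm_le_of_ae_tendsto (.of_forall fun n => ?_)
    (fun n => (hF n).aestronglyMeasurable) hlim).trans_lt (ENNReal.ofReal_lt_top (r := C))
  rw [eLpNorm_one_eq_lintegral_enorm, ← ofReal_integral_norm_eq_lintegral_enorm (hF n)]
  exact ENNReal.ofReal_le_ofReal (hC n)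

namespace QBFS

variable {Ω : Type*} [MeasurableSpace Ω] {μ : Measure Ω} (X : QBFS μ)

def toSubmodule : Submodule ℝ (Ω → ℝ) where
  carrier := X.carrier
  add_mem' {f g} hf hg := X.add_mem f hf g hg
  zero_mem' := X.zero_mem
  smul_mem' := X.smul_mem

variable {X}

theorem sub_mem {f g : Ω → ℝ} (hf : f ∈ X.carrier) (hg : g ∈ X.carrier) : f - g ∈ X.carrier :=
  X.toSubmodule.sub_mem hf hg

theorem sum_mem {ι : Type*} {s : Finset ι} {f : ι → Ω → ℝ} (hf : ∀ i ∈ s, f i ∈ X.carrier) :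
    ∑ i ∈ s, f i ∈ X.carrier :=
  X.toSubmodule.sum_mem hf

theorem mem_of_abs_le {f g : Ω → ℝ} (hf : f ∈ X.carrier) (hg : AEMeasurable g μ)
    (hgf : ∀ x, |g x| ≤ |f x|) : g ∈ X.carrier :=
  (X.ideal f hf g hg (.of_forall hgf)).1

theorem qnorm_le_of_abs_le {f g : Ω → ℝ} (hf : f ∈ X.carrier) (hg : AEMeasurable g μ)
    (hgf : ∀ x, |g x| ≤ |f x|) : X.qnorm g ≤ X.qnorm f :=
  (X.ideal f hf g hg (.of_forall hgf)).2

theorem indicator_mem {w : Ω → ℝ} (hw : w ∈ X.carrier) {E : Set Ω} (hE : MeasurableSet E) :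
    E.indicator w ∈ X.carrier :=
  mem_of_abs_le hw ((X.aemeasurable_mem w hw).indicator hE) fun x => by
    simpa only [Real.norm_eq_abs] using norm_indicator_le_norm_self w x

theorem qnorm_indicator_le {w : Ω → ℝ} (hw : w ∈ X.carrier) {E : Set Ω} (hE : MeasurableSet E) :
    X.qnorm (E.indicator w) ≤ X.qnorm w :=
  qnorm_le_of_abs_le hw ((X.aemeasurable_mem w hw).indicator hE) fun x => by
    simpa only [Real.norm_eq_abs] using norm_indicator_le_norm_self w x

theorem indicator_one_mem_of_subset {E F : Set Ω} (hE : MeasurableSet E) (hEF : E ⊆ F)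
    (hF : F.indicator 1 ∈ X.carrier) : E.indicator 1 ∈ X.carrier := by
  simpa [indicator_indicator, inter_eq_left.2 hEF] using indicator_mem hF hE

theorem indicator_one_union_mem {A B : Set Ω} (hA : MeasurableSet A) (hB : MeasurableSet B)
    (hAX : A.indicator 1 ∈ X.carrier) (hBX : B.indicator 1 ∈ X.carrier) :
    (A ∪ B).indicator 1 ∈ X.carrier := by
  rw [← union_sdiff_self, indicator_union_of_disjoint disjoint_sdiff_right]
  exact X.add_mem _ hAX _ (indicator_one_mem_of_subset (hB.diff hA) sdiff_subset hBX)

theorem indicator_one_accumulate_mem {F : ℕ → Set Ω} (hFm : ∀ n, MeasurableSet (F n))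
    (hFX : ∀ n, (F n).indicator 1 ∈ X.carrier) (n : ℕ) :
    (accumulate F n).indicator 1 ∈ X.carrier := by
  induction n with
  | zero => simpa using hFX 0
  | succ n ih =>
    rw [accumulate_succ]
    exact indicator_one_union_mem (.accumulate hFm n) (hFm _) ih (hFX _)

variable (X) in
structure IsExhaustion (G : ℕ → Set Ω) : Prop where
  measurableSet : ∀ n, MeasurableSet (G n)
  indicator_mem : ∀ n, (G n).indicator 1 ∈ X.carrier
  monotone : Monotone G
  ae_mem_iUnion : ∀ᵐ x ∂μ, x ∈ ⋃ n, G n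

theorem isExhaustion_accumulate {F : ℕ → Set Ω} (hFm : ∀ n, MeasurableSet (F n))
    (hFX : ∀ n, (F n).indicator 1 ∈ X.carrier) (hcover : ∀ᵐ x ∂μ, x ∈ ⋃ n, F n) :
    X.IsExhaustion (accumulate F) :=
  ⟨.accumulate hFm, indicator_one_accumulate_mem hFm hFX, monotone_accumulate,
    by rwa [iUnion_accumulate]⟩

variable (X) in
theorem exists_seq_indicator_mem_ae_cover [SigmaFinite μ] :
    ∃ H : ℕ → Set Ω, (∀ n, MeasurableSet (H n)) ∧ (∀ n, (H n).indicator 1 ∈ X.carrier) ∧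
      ∀ᵐ x ∂μ, x ∈ ⋃ n, H n := by
  obtain ⟨ν, hν, hμν, -⟩ := exists_isFiniteMeasure_absolutelyContinuous μ
  set 𝒢 := {G : Set Ω | MeasurableSet G ∧ G.indicator 1 ∈ X.carrier}
  obtain ⟨u, -, hu, hu𝒢⟩ := exists_seq_tendsto_sSup (S := ν '' 𝒢)
    ⟨0, ∅, ⟨.empty, by rw [indicator_empty']; exact X.zero_mem⟩, measure_empty⟩
    (OrderTop.bddAbove _)
  choose H hH hνH using hu𝒢
  refine ⟨H, fun n => (hH n).1, fun n => (hH n).2, ?_⟩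
  -- A non-null remainder would contain, by saturation, a set of `𝒢` of positive `ν`-measure,
  -- and adding it to `H n` would push `ν` above the supremum.
  by_contra hR
  have hRm : MeasurableSet (⋃ n, H n)ᶜ := (MeasurableSet.iUnion fun n => (hH n).1).compl
  obtain ⟨F, hFR, hFm, hFpos, hFX⟩ :=
    X.saturated _ hRm <| pos_iff_ne_zero.2 fun h => hR <| by
      filter_upwards [measure_eq_zero_iff_ae_notMem.1 h] with x hx using notMem_compl_iff.1 hx
  have hsup_ne_top : sSup (ν '' 𝒢) ≠ ⊤ :=
    ((sSup_le <| by rintro _ ⟨G, -, rfl⟩; exact measure_mono (subset_univ G)).trans_lt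
      (measure_lt_top ν univ)).ne
  have hle : ∀ n, u n + ν F ≤ sSup (ν '' 𝒢) := fun n => by
    rw [← hνH n, ← measure_union (disjoint_compl_right.mono (subset_iUnion H n) hFR) hFm]
    exact le_sSup ⟨_, ⟨(hH n).1.union hFm, indicator_one_union_mem (hH n).1 hFm (hH n).2 hFX⟩, rfl⟩
  have hνF : ν F ≤ 0 := ENNReal.le_of_add_le_add_left hsup_ne_top
    (by simpa using le_of_tendsto' (hu.add_const (ν F)) hle)
  exact hFpos.ne' (hμν (nonpos_iff_eq_zero.1 hνF))

variable (X) in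
/-- An element of `X*`; its values outside `X.carrier` play no role. -/
structure BoundedLinearFunctional where
  toFun : (Ω → ℝ) → ℝ
  map_add' : ∀ f ∈ X.carrier, ∀ g ∈ X.carrier, toFun (f + g) = toFun f + toFun g
  map_smul' : ∀ (c : ℝ), ∀ f ∈ X.carrier, toFun (c • f) = c * toFun f
  bound : ℝ≥0
  abs_le_bound : ∀ f ∈ X.carrier, |toFun f| ≤ bound * X.qnorm f

namespace BoundedLinearFunctional

instance : CoeFun X.BoundedLinearFunctional fun _ => (Ω → ℝ) → ℝ := ⟨toFun⟩

attribute [coe] toFun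

variable (φ : X.BoundedLinearFunctional)

theorem map_zero : φ 0 = 0 := by
  simpa using φ.map_smul' 0 0 X.zero_mem

theorem map_sub {f g : Ω → ℝ} (hf : f ∈ X.carrier) (hg : g ∈ X.carrier) :
    φ (f - g) = φ f - φ g := by
  have hmg : (-1 : ℝ) • g ∈ X.carrier := X.smul_mem (-1) g hg
  rw [sub_eq_add_neg, ← neg_one_smul ℝ g, φ.map_add' f hf _ hmg, φ.map_smul' _ g hg]
  ring

theorem map_sum {ι : Type*} (s : Finset ι) {f : ι → Ω → ℝ} (hf : ∀ i ∈ s, f i ∈ X.carrier) :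
    φ (∑ i ∈ s, f i) = ∑ i ∈ s, φ (f i) := by
  classical
  induction s using Finset.induction_on with
  | empty => simpa using φ.map_zero
  | insert a s ha ih =>
    rw [Finset.forall_mem_insert] at hf
    rw [Finset.sum_insert ha, Finset.sum_insert ha, φ.map_add' _ hf.1 _ (sum_mem hf.2), ih hf.2]

theorem map_congr_ae {f g : Ω → ℝ} (hf : f ∈ X.carrier) (hg : g ∈ X.carrier) (hfg : f =ᵐ[μ] g) :
    φ f = φ g := by
  have hq : X.qnorm (f - g) = 0 :=
    (X.qnorm_eq_zero_iff _ (sub_mem hf hg)).2 (hfg.mono fun x hx => by simp [hx])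
  have h := φ.abs_le_bound _ (sub_mem hf hg)
  rw [hq, mul_zero, abs_nonpos_iff, φ.map_sub hf hg, sub_eq_zero] at h
  exact h

theorem tendsto_map_of_abs_sub_le (hoc : X.OrderContinuous) {f : Ω → ℝ} {s r : ℕ → Ω → ℝ}
    (hf : f ∈ X.carrier) (hs : ∀ n, s n ∈ X.carrier) (hr : ∀ n, r n ∈ X.carrier)
    (hsr : ∀ n x, |f x - s n x| ≤ |r n x|)
    (hr0 : ∀ᵐ x ∂μ, Antitone (r · x) ∧ Tendsto (r · x) atTop (𝓝 0)) :
    Tendsto (fun n => φ (s n)) atTop (𝓝 (φ f)) := by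
  rw [tendsto_iff_norm_sub_tendsto_zero]
  refine squeeze_zero (fun _ => norm_nonneg _) (fun n => ?_)
    (by simpa using (hoc r hr hr0).const_mul (φ.bound : ℝ))
  have hfs := sub_mem hf (hs n)
  calc ‖φ (s n) - φ f‖ = |φ (f - s n)| := by
        rw [φ.map_sub hf (hs n), Real.norm_eq_abs, abs_sub_comm]
    _ ≤ φ.bound * X.qnorm (f - s n) := φ.abs_le_bound _ hfs
    _ ≤ φ.bound * X.qnorm (r n) := by
      gcongr; exact qnorm_le_of_abs_le (hr n) (X.aemeasurable_mem _ hfs) (hsr n)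

theorem sum_map_indicator {w : Ω → ℝ} (hw : w ∈ X.carrier) {E : ℕ → Set Ω}
    (hE : ∀ i, MeasurableSet (E i)) (hd : Pairwise (Disjoint on E)) (s : Finset ℕ) :
    ∑ i ∈ s, φ ((E i).indicator w) = φ ((⋃ i ∈ s, E i).indicator w) := by
  rw [Finset.indicator_biUnion s E (hd.set_pairwise _), ← Finset.sum_fn,
    φ.map_sum s fun i _ => indicator_mem hw (hE i)]

theorem sum_abs_map_indicator_le {w : Ω → ℝ} (hw : w ∈ X.carrier) {E : ℕ → Set Ω}
    (hE : ∀ i, MeasurableSet (E i)) (hd : Pairwise (Disjoint on E)) (s : Finset ℕ) :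
    ∑ i ∈ s, |φ ((E i).indicator w)| ≤ 2 * (φ.bound * X.qnorm w) := by
  have hbdd : ∀ t : Finset ℕ, |∑ i ∈ t, φ ((E i).indicator w)| ≤ φ.bound * X.qnorm w := by
    intro t
    have hU : MeasurableSet (⋃ i ∈ t, E i) := .biUnion t.countable_toSet fun i _ => hE i
    rw [φ.sum_map_indicator hw hE hd]
    exact (φ.abs_le_bound _ (indicator_mem hw hU)).trans (by gcongr; exact qnorm_indicator_le hw hU)
  classical
  rw [← Finset.sum_filter_add_sum_filter_not s (fun i => 0 ≤ φ ((E i).indicator w))]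
  have hpos : ∑ i ∈ s with 0 ≤ φ ((E i).indicator w), |φ ((E i).indicator w)|
      ≤ φ.bound * X.qnorm w := by
    rw [Finset.sum_congr rfl fun i hi => abs_of_nonneg (Finset.mem_filter.1 hi).2]
    exact (le_abs_self _).trans (hbdd _)
  have hneg : ∑ i ∈ s with ¬0 ≤ φ ((E i).indicator w), |φ ((E i).indicator w)|
      ≤ φ.bound * X.qnorm w := by
    rw [Finset.sum_congr rfl fun i hi => abs_of_neg (not_le.1 (Finset.mem_filter.1 hi).2),
      Finset.sum_neg_distrib]
    exact (neg_le_abs _).trans (hbdd _)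
  linarith

theorem tendsto_map_indicator_of_monotone (hoc : X.OrderContinuous) {w : Ω → ℝ}
    (hw : w ∈ X.carrier) {A : ℕ → Set Ω} (hA : ∀ n, MeasurableSet (A n)) (hmono : Monotone A) :
    Tendsto (fun n => φ ((A n).indicator w)) atTop (𝓝 (φ ((⋃ n, A n).indicator w))) := by
  have habsw : (fun x => |w x|) ∈ X.carrier :=
    mem_of_abs_le hw (X.aemeasurable_mem w hw).abs fun x => (abs_abs _).le
  refine φ.tendsto_map_of_abs_sub_le hoc (indicator_mem hw (.iUnion hA))
    (fun n => indicator_mem hw (hA n)) (r := fun n => ((⋃ n, A n) \ A n).indicator fun x => |w x|)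
    (fun n => indicator_mem habsw ((MeasurableSet.iUnion hA).diff (hA n)))
    (fun n x => ?_) (.of_forall fun x => ⟨fun m n hmn => ?_, ?_⟩)
  · rw [← Pi.sub_apply, ← indicator_sdiff (subset_iUnion A n)]
    by_cases hx : x ∈ (⋃ n, A n) \ A n
    · rw [indicator_of_mem hx, indicator_of_mem hx, abs_abs]
    · rw [indicator_of_notMem hx, indicator_of_notMem hx]
  · exact indicator_le_indicator_of_subset (sdiff_subset_sdiff_right (hmono hmn))
      (fun _ => abs_nonneg _) x
  · refine tendsto_const_nhds.congr' ?_
    by_cases hx : x ∈ ⋃ n, A n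
    · obtain ⟨k, hk⟩ := mem_iUnion.1 hx
      filter_upwards [eventually_ge_atTop k] with n hn
      exact (indicator_of_notMem (fun h => h.2 (hmono hn hk)) _).symm
    · exact .of_forall fun n => (indicator_of_notMem (fun h => hx h.1) _).symm

theorem hasSum_map_indicator (hoc : X.OrderContinuous) {w : Ω → ℝ} (hw : w ∈ X.carrier)
    {E : ℕ → Set Ω} (hE : ∀ i, MeasurableSet (E i)) (hd : Pairwise (Disjoint on E)) :
    HasSum (fun i => φ ((E i).indicator w)) (φ ((⋃ i, E i).indicator w)) := by
  have habs : Summable fun i => |φ ((E i).indicator w)| :=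
    summable_of_sum_le (fun i => abs_nonneg _) (φ.sum_abs_map_indicator_le hw hE hd)
  refine (summable_abs_iff.1 habs).hasSum_iff_tendsto_nat.2 ?_
  have hU : ⋃ i, E i = ⋃ n, ⋃ i ∈ Finset.range n, E i := by
    ext x
    simp only [mem_iUnion, Finset.mem_range]
    exact ⟨fun ⟨i, hi⟩ => ⟨i + 1, i, i.lt_succ_self, hi⟩, fun ⟨_, i, _, hi⟩ => ⟨i, hi⟩⟩
  simp_rw [φ.sum_map_indicator hw hE hd, hU]
  exact φ.tendsto_map_indicator_of_monotone hoc hw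
    (fun n => .biUnion (Finset.range n).countable_toSet fun i _ => hE i)
    fun m n hmn => biUnion_subset_biUnion_left (by simpa using Finset.range_mono hmn)

open Classical in
noncomputable def toSignedMeasure (hoc : X.OrderContinuous) {w : Ω → ℝ} (hw : w ∈ X.carrier) :
    SignedMeasure Ω where
  measureOf' E := if MeasurableSet E then φ (E.indicator w) else 0
  empty' := by rw [if_pos .empty, indicator_empty', φ.map_zero]
  not_measurable' _ hE := if_neg hE
  m_iUnion' E hE hd := by
    simpa only [hE, MeasurableSet.iUnion hE, if_true] using φ.hasSum_map_indicator hoc hw hE hd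

theorem toSignedMeasure_apply (hoc : X.OrderContinuous) {w : Ω → ℝ} (hw : w ∈ X.carrier)
    {E : Set Ω} (hE : MeasurableSet E) : φ.toSignedMeasure hoc hw E = φ (E.indicator w) :=
  if_pos hE

theorem toSignedMeasure_absolutelyContinuous (hoc : X.OrderContinuous) {w : Ω → ℝ}
    (hw : w ∈ X.carrier) : φ.toSignedMeasure hoc hw ≪ᵥ μ.toENNRealVectorMeasure := by
  refine VectorMeasure.AbsolutelyContinuous.mk fun E hE hE0 => ?_
  rw [Measure.toENNRealVectorMeasure_apply_measurable hE] at hE0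
  rw [toSignedMeasure_apply _ _ _ hE, ← φ.map_zero]
  refine φ.map_congr_ae (indicator_mem hw hE) X.zero_mem ?_
  filter_upwards [measure_eq_zero_iff_ae_notMem.1 hE0] with x hx
  simp [hx]

theorem exists_integrable_map_indicator_eq [SigmaFinite μ] (hoc : X.OrderContinuous)
    {w : Ω → ℝ} (hw : w ∈ X.carrier) :
    ∃ h : Ω → ℝ, Measurable h ∧ Integrable h μ ∧
      ∀ E, MeasurableSet E → φ (E.indicator w) = ∫ x in E, h x ∂μ := by
  set ν := φ.toSignedMeasure hoc hw
  refine ⟨ν.rnDeriv μ, SignedMeasure.measurable_rnDeriv ν μ,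
    SignedMeasure.integrable_rnDeriv ν μ, fun E hE => ?_⟩
  rw [← withDensityᵥ_apply (SignedMeasure.integrable_rnDeriv ν μ) hE,
    SignedMeasure.withDensityᵥ_rnDeriv_eq ν μ (φ.toSignedMeasure_absolutelyContinuous hoc hw),
    toSignedMeasure_apply _ _ _ hE]

def IsDensityOn (g : Ω → ℝ) (G : Set Ω) : Prop :=
  IntegrableOn g G μ ∧ ∀ E ⊆ G, MeasurableSet E → φ (E.indicator 1) = ∫ x in E, g x ∂μ

variable {φ}

theorem IsDensityOn.congr {g g' : Ω → ℝ} {G : Set Ω} (hg : φ.IsDensityOn g G)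
    (hG : MeasurableSet G) (hgg' : EqOn g g' G) : φ.IsDensityOn g' G :=
  ⟨hg.1.congr_fun hgg' hG, fun E hEG hE =>
    (hg.2 E hEG hE).trans (setIntegral_congr_fun hE (hgg'.mono hEG))⟩

theorem IsDensityOn.union {g : Ω → ℝ} {A B : Set Ω} (hA : φ.IsDensityOn g A)
    (hB : φ.IsDensityOn g B) (hAm : MeasurableSet A) (hBm : MeasurableSet B)
    (hAX : A.indicator 1 ∈ X.carrier) (hBX : B.indicator 1 ∈ X.carrier) (hAB : Disjoint A B) :
    φ.IsDensityOn g (A ∪ B) := by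
  refine ⟨hA.1.union hB.1, fun E hE hEm => ?_⟩
  have hsplit : E = (E ∩ A) ∪ (E ∩ B) := by rw [← inter_union_distrib_left, inter_eq_left.2 hE]
  have hdisj : Disjoint (E ∩ A) (E ∩ B) := hAB.mono inter_subset_right inter_subset_right
  rw [hsplit, indicator_union_of_disjoint hdisj, ← Pi.add_def,
    φ.map_add' _ (indicator_one_mem_of_subset (hEm.inter hAm) inter_subset_right hAX)
      _ (indicator_one_mem_of_subset (hEm.inter hBm) inter_subset_right hBX),
    hA.2 _ inter_subset_right (hEm.inter hAm), hB.2 _ inter_subset_right (hEm.inter hBm),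
    setIntegral_union hdisj (hEm.inter hBm) (hA.1.mono_set inter_subset_right)
      (hB.1.mono_set inter_subset_right)]

variable (φ) in
theorem exists_isDensityOn [SigmaFinite μ] (hoc : X.OrderContinuous) {G : Set Ω}
    (hGX : G.indicator 1 ∈ X.carrier) : ∃ g, Measurable g ∧ φ.IsDensityOn g G := by
  obtain ⟨g, hgm, hgi, hg⟩ := φ.exists_integrable_map_indicator_eq hoc hGX
  refine ⟨g, hgm, hgi.integrableOn, fun E hEG hE => ?_⟩
  rw [← hg E hE, indicator_indicator, inter_eq_left.2 hEG]

theorem isDensityOn_accumulate_tsum {F : ℕ → Set Ω} (hFm : ∀ k, MeasurableSet (F k))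
    (hFX : ∀ k, (F k).indicator 1 ∈ X.carrier) (hd : Pairwise (Disjoint on F))
    {g : ℕ → Ω → ℝ} (hg : ∀ k, φ.IsDensityOn (g k) (F k)) (n : ℕ) :
    φ.IsDensityOn (fun x => ∑' k, (F k).indicator (g k) x) (accumulate F n) := by
  have hpiece : ∀ k, φ.IsDensityOn (fun x => ∑' k, (F k).indicator (g k) x) (F k) := fun k =>
    (hg k).congr (hFm k) fun x hx => by
      rw [tsum_eq_single k fun j hj =>
        indicator_of_notMem (fun hxj => disjoint_left.1 (hd hj) hxj hx) _, indicator_of_mem hx]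
  induction n with
  | zero => simpa using hpiece 0
  | succ n ih =>
    rw [accumulate_succ]
    exact ih.union (hpiece (n + 1)) (.accumulate hFm n) (hFm _)
      (indicator_one_accumulate_mem hFm hFX n) (hFX _) (disjoint_accumulate hd n.lt_succ_self)

theorem exists_isExhaustion_isDensityOn [SigmaFinite μ] (hoc : X.OrderContinuous) :
    ∃ (G : ℕ → Set Ω) (g : Ω → ℝ), X.IsExhaustion G ∧ Measurable g ∧
      ∀ n, φ.IsDensityOn g (G n) := by
  obtain ⟨H, hHm, hHX, hH⟩ := X.exists_seq_indicator_mem_ae_cover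
  have hFm : ∀ k, MeasurableSet (disjointed H k) := .disjointed hHm
  have hFX : ∀ k, (disjointed H k).indicator 1 ∈ X.carrier := fun k =>
    indicator_one_mem_of_subset (hFm k) (disjointed_subset H k) (hHX k)
  choose g hgm hg using fun k => φ.exists_isDensityOn hoc (hFX k)
  exact ⟨accumulate (disjointed H), fun x => ∑' k, (disjointed H k).indicator (g k) x,
    isExhaustion_accumulate hFm hFX (by rwa [iUnion_disjointed]),
    .tsum fun k => (hgm k).indicator (hFm k),
    φ.isDensityOn_accumulate_tsum hFm hFX (disjoint_disjointed H) hg⟩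

theorem map_simpleFunc_eq_integral {g : Ω → ℝ} {G : Set Ω} (hg : φ.IsDensityOn g G)
    (hGX : G.indicator 1 ∈ X.carrier) (s : SimpleFunc Ω ℝ) (hs : ∀ x ∉ G, s x = 0) :
    ⇑s ∈ X.carrier ∧ Integrable (fun x => s x * g x) μ ∧ φ s = ∫ x, s x * g x ∂μ := by
  induction s using SimpleFunc.induction with
  | @const c S hS =>
    have hval : ⇑(SimpleFunc.piecewise S hS (.const Ω c) (.const Ω 0)) = c • S.indicator 1 := by
      ext x; by_cases hx : x ∈ S <;> simp [hx]
    by_cases hc : c = 0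
    · simp [hc, φ.map_zero, X.zero_mem]
    have hSG : S ⊆ G := fun x hxS => by_contra fun hxG => hc (by simpa [hval, hxS] using hs x hxG)
    have hSX := indicator_one_mem_of_subset hS hSG hGX
    have hmul : (fun x => (c • S.indicator 1) x * g x) = fun x => c * S.indicator g x := by
      ext x; by_cases hx : x ∈ S <;> simp [hx]
    rw [hval, hmul]
    refine ⟨X.smul_mem c _ hSX, ((hg.1.mono_set hSG).integrable_indicator hS).const_mul c, ?_⟩
    rw [φ.map_smul' c _ hSX, hg.2 S hSG hS, integral_const_mul, integral_indicator hS]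
  | @add f f' hff' hf hf' =>
    have hsupp : ∀ x ∉ G, f x = 0 ∧ f' x = 0 := fun x hx => by
      have hsum : f x + f' x = 0 := by simpa using hs x hx
      by_cases h : f x = 0
      · exact ⟨h, by simpa [h] using hsum⟩
      · have h' : f' x = 0 := by_contra fun h' => disjoint_left.1 hff' h h'
        exact absurd (by simpa [h'] using hsum) h
    obtain ⟨hfX, hfi, hfφ⟩ := hf fun x hx => (hsupp x hx).1
    obtain ⟨hf'X, hf'i, hf'φ⟩ := hf' fun x hx => (hsupp x hx).2
    have hsum : (fun x => (f + f') x * g x) = fun x => f x * g x + f' x * g x := by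
      ext x; simp [add_mul]
    rw [hsum, SimpleFunc.coe_add, φ.map_add' _ hfX _ hf'X, hfφ, hf'φ, integral_add hfi hf'i]
    exact ⟨X.add_mem _ hfX _ hf'X, hfi.add hf'i, rfl⟩

theorem integral_mul_abs_le {g : Ω → ℝ} {G : Set Ω} (hg : φ.IsDensityOn g G)
    (hGX : G.indicator 1 ∈ X.carrier) (hgm : Measurable g) (s : SimpleFunc Ω ℝ)
    (hs : ∀ x ∉ G, s x = 0) {f : Ω → ℝ} (hf : f ∈ X.carrier) (hsf : ∀ x, |s x| ≤ |f x|) :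
    ∫ x, s x * |g x| ∂μ ≤ 2 * (φ.bound * X.qnorm f) := by
  have hpart : ∀ Q, MeasurableSet Q → Integrable (fun x => Q.indicator s x * g x) μ ∧
      |∫ x, Q.indicator s x * g x ∂μ| ≤ φ.bound * X.qnorm f := fun Q hQ => by
    have hsQ : ⇑(s.restrict Q) = Q.indicator s := SimpleFunc.coe_restrict s hQ
    obtain ⟨hX, hi, hφ⟩ := φ.map_simpleFunc_eq_integral hg hGX (s.restrict Q) fun x hx => by
      rw [hsQ, indicator_apply_eq_zero.2 fun _ => hs x hx]
    rw [hsQ] at hX hi hφ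
    refine ⟨hi, hφ ▸ (φ.abs_le_bound _ hX).trans ?_⟩
    gcongr
    refine qnorm_le_of_abs_le hf (X.aemeasurable_mem _ hX) fun x => ?_
    by_cases hx : x ∈ Q
    · simpa [hx] using hsf x
    · simp [hx]
  set P := {x | 0 ≤ g x}
  have hP : MeasurableSet P := measurableSet_le measurable_const hgm
  obtain ⟨hPi, hPle⟩ := hpart P hP
  obtain ⟨hPci, hPcle⟩ := hpart Pᶜ hP.compl
  have hsplit : (fun x => s x * |g x|) =
      fun x => P.indicator s x * g x - Pᶜ.indicator s x * g x := by
    ext x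
    by_cases hx : 0 ≤ g x
    · simp [P, hx, abs_of_nonneg hx]
    · simp [P, hx, abs_of_neg (not_le.1 hx)]
  rw [hsplit, integral_sub hPi hPci]
  linarith [le_abs_self (∫ x, P.indicator s x * g x ∂μ),
    neg_abs_le (∫ x, Pᶜ.indicator s x * g x ∂μ)]

theorem map_eq_integral_of_nonneg (hoc : X.OrderContinuous) {G : ℕ → Set Ω}
    (hG : X.IsExhaustion G) {g : Ω → ℝ} (hgm : Measurable g) (hg : ∀ n, φ.IsDensityOn g (G n))
    {f : Ω → ℝ} (hf : f ∈ X.carrier) (hfm : Measurable f) (h0 : 0 ≤ f) :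
    Integrable (fun x => f x * g x) μ ∧ φ f = ∫ x, f x * g x ∂μ := by
  obtain ⟨t, ht, ht_supp, ht_mono, ht_lim⟩ := SimpleFunc.exists_seq_supported_monotone_tendsto_ae
    hfm h0 hG.measurableSet hG.monotone hG.ae_mem_iUnion
  have ht_abs : ∀ n x, |t n x| ≤ |f x| := fun n x => abs_le_abs_of_nonneg (ht n x).1 (ht n x).2
  have hrep := fun n => φ.map_simpleFunc_eq_integral (hg n) (hG.indicator_mem n) (t n) (ht_supp n)
  have hfg_lim : ∀ᵐ x ∂μ, Tendsto (fun n => t n x * g x) atTop (𝓝 (f x * g x)) := by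
    filter_upwards [ht_lim] with x hx using hx.mul_const (g x)
  have hint : Integrable (fun x => f x * g x) μ := by
    refine integrable_of_tendsto_ae_of_integral_norm_le (fun n => (hrep n).2.1) hfg_lim
      (C := 2 * (φ.bound * X.qnorm f)) fun n => ?_
    calc ∫ x, ‖t n x * g x‖ ∂μ = ∫ x, t n x * |g x| ∂μ := by
          congr 1; ext x
          rw [norm_mul, Real.norm_eq_abs, Real.norm_eq_abs, abs_of_nonneg (ht n x).1]
      _ ≤ 2 * (φ.bound * X.qnorm f) :=
          φ.integral_mul_abs_le (hg n) (hG.indicator_mem n) hgm (t n) (ht_supp n) hf (ht_abs n)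
  have hφ : Tendsto (fun n => φ (t n)) atTop (𝓝 (φ f)) := by
    refine φ.tendsto_map_of_abs_sub_le hoc hf (fun n => (hrep n).1) (r := fun n => f - t n)
      (fun n => sub_mem hf (hrep n).1) (fun n x => le_rfl) ?_
    filter_upwards [ht_lim] with x hx
    exact ⟨fun m n hmn => sub_le_sub_left (ht_mono x hmn) _, by simpa using hx.const_sub (f x)⟩
  have hI : Tendsto (fun n => ∫ x, t n x * g x ∂μ) atTop (𝓝 (∫ x, f x * g x ∂μ)) :=
    tendsto_integral_of_dominated_convergence (fun x => ‖f x * g x‖)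
      (fun n => (hrep n).2.1.aestronglyMeasurable) hint.norm
      (fun n => .of_forall fun x => by
        rw [norm_mul, norm_mul]; exact mul_le_mul_of_nonneg_right (ht_abs n x) (norm_nonneg _))
      hfg_lim
  exact ⟨hint, tendsto_nhds_unique hφ (hI.congr fun n => ((hrep n).2.2).symm)⟩

theorem map_eq_integral (hoc : X.OrderContinuous) {G : ℕ → Set Ω} (hG : X.IsExhaustion G)
    {g : Ω → ℝ} (hgm : Measurable g) (hg : ∀ n, φ.IsDensityOn g (G n)) {f : Ω → ℝ}
    (hf : f ∈ X.carrier) : Integrable (fun x => f x * g x) μ ∧ φ f = ∫ x, f x * g x ∂μ := by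
  have hfae := X.aemeasurable_mem f hf
  set f' := hfae.mk f
  have hf'm : Measurable f' := hfae.measurable_mk
  have hf'X : f' ∈ X.carrier :=
    (X.ideal f hf f' hf'm.aemeasurable (hfae.ae_eq_mk.mono fun x hx => by rw [hx])).1
  have hpart : ∀ h : Ω → ℝ, Measurable h → (∀ x, |max (h x) 0| ≤ |f' x|) →
      max h 0 ∈ X.carrier ∧ Integrable (fun x => max (h x) 0 * g x) μ ∧
        φ (max h 0) = ∫ x, max (h x) 0 * g x ∂μ := fun h hm hle => by
    have hX := mem_of_abs_le hf'X (hm.max measurable_const).aemeasurable hle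
    exact ⟨hX, φ.map_eq_integral_of_nonneg hoc hG hgm hg hX (hm.max measurable_const)
      fun x => le_max_right _ _⟩
  obtain ⟨hpX, hpi, hpφ⟩ := hpart f' hf'm fun x => by
    rcases le_total (f' x) 0 with h | h <;> simp [h, abs_nonneg]
  obtain ⟨hnX, hni, hnφ⟩ := hpart (-f') hf'm.neg fun x => by
    rcases le_total (f' x) 0 with h | h <;> simp [h, abs_nonneg]
  have hdecomp : f' = max f' 0 - max (-f') 0 :=
    funext fun x => (max_zero_sub_max_neg_zero_eq_self (f' x)).symm
  have hfg : (fun x => f x * g x) =ᵐ[μ]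
      fun x => max (f' x) 0 * g x - max (-f' x) 0 * g x := by
    filter_upwards [hfae.ae_eq_mk] with x hx
    rw [hx, ← sub_mul, max_zero_sub_max_neg_zero_eq_self]
  refine ⟨(hpi.sub hni).congr hfg.symm, ?_⟩
  rw [φ.map_congr_ae hf hf'X hfae.ae_eq_mk, hdecomp, φ.map_sub hpX hnX, hpφ, hnφ,
    ← integral_sub hpi hni, integral_congr_ae hfg]
  rfl

end BoundedLinearFunctional

end QBFS

/-- In an order-continuous quasi-Banach function space, every bounded linear
functional is given by integration against a function in the Köthe dual. -/
theorem dual_eq_kotheDual_of_orderContinuous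
    {Ω : Type*} [MeasurableSpace Ω] {μ : Measure Ω} [SigmaFinite μ]
    (X : QBFS μ) (hoc : X.OrderContinuous)
    (φ : (Ω → ℝ) → ℝ)
    (hadd : ∀ f ∈ X.carrier, ∀ g ∈ X.carrier, φ (f + g) = φ f + φ g)
    (hsmul : ∀ (c : ℝ), ∀ f ∈ X.carrier, φ (c • f) = c * φ f)
    (hbdd : ∃ C : ℝ, ∀ f ∈ X.carrier, |φ f| ≤ C * X.qnorm f) :
    ∃ g ∈ X.kotheDual, ∀ f ∈ X.carrier, φ f = ∫ x, f x * g x ∂μ := by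
  obtain ⟨C, hC⟩ := hbdd
  let ψ : X.BoundedLinearFunctional := ⟨φ, hadd, hsmul, C.toNNReal, fun f hf =>
    (hC f hf).trans (by gcongr; exacts [X.qnorm_nonneg f hf, C.le_coe_toNNReal])⟩
  obtain ⟨G, g, hG, hgm, hg⟩ := ψ.exists_isExhaustion_isDensityOn hoc
  have hrep := fun f (hf : f ∈ X.carrier) => ψ.map_eq_integral hoc hG hgm hg hf
  exact ⟨g, ⟨hgm.aemeasurable, fun f hf => (hrep f hf).1⟩, fun f hf => (hrep f hf).2⟩
end
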